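/- arXiv:2407.06719 — 3 statements merged into one kernel-verified Lean document; each statement's English description precedes it below -/
import Mathlib

section
/- Every Borel function f : 2^ω → 2 that is affine over ℤ/2 — i.e., satisfies f(x⃗ + y⃗ + z⃗) = f(x⃗) + f(y⃗) + f(z⃗) (with coordinatewise addition mod 2) for all x⃗, y⃗, z⃗ ∈ 2^ω — is continuous, and hence depends on only finitely many coordinates. -/
open MeasureTheory Pointwise

namespace BorelAffineAux

/-- The finitary conclusion follows from continuity, by compactness of `2^ω`. -/
lemma finitary_of_continuous (f : (ℕ → Bool) → Bool) (hf : Continuous f) :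
    ∃ s : Finset ℕ, ∀ x y : ℕ → Bool, (∀ i ∈ s, x i = y i) → f x = f y := by
  have hloc : ∀ x : ℕ → Bool, ∃ I : Finset ℕ,
      ∀ y : ℕ → Bool, (∀ i ∈ I, y i = x i) → f y = f x := by
    intro x
    have hopen : IsOpen (f ⁻¹' {f x}) := (isOpen_discrete _).preimage hf
    rw [isOpen_pi_iff] at hopen
    obtain ⟨I, u, hu, hsub⟩ := hopen x rfl
    refine ⟨I, fun y hy => ?_⟩
    have : y ∈ (I : Set ℕ).pi u := by
      intro i hi
      rw [hy i hi]
      exact (hu i hi).2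
    exact hsub this
  choose I hI using hloc
  have hcov : (Set.univ : Set (ℕ → Bool)) ⊆
      ⋃ x : ℕ → Bool, {y | ∀ i ∈ I x, y i = x i} :=
    fun x _ => Set.mem_iUnion.2 ⟨x, fun i _ => rfl⟩
  obtain ⟨t, ht⟩ := isCompact_univ.elim_finite_subcover
    (fun x : ℕ → Bool => {y : ℕ → Bool | ∀ i ∈ I x, y i = x i})
    (fun x => by
      show IsOpen {y : ℕ → Bool | ∀ i ∈ I x, y i = x i}
      have : {y : ℕ → Bool | ∀ i ∈ I x, y i = x i} = ((I x : Set ℕ)).pi (fun i => {x i}) := by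
        ext y; simp [Set.mem_pi]
      rw [this]
      exact isOpen_set_pi (I x).finite_toSet (fun i _ => isOpen_discrete _))
    hcov
  refine ⟨t.sup I, fun x y hxy => ?_⟩
  obtain ⟨c, hct, hxc⟩ := Set.mem_iUnion₂.1 (ht (Set.mem_univ x))
  have hyc : ∀ i ∈ I c, y i = c i := fun i hi => by
    rw [← hxy i ((Finset.le_sup hct : I c ≤ t.sup I) hi)]
    exact hxc i hi
  rw [hI c x hxc, hI c y hyc]

end BorelAffineAux

/-- Every Borel function `f : 2^ω → 2` that is affine over `ℤ/2`, i.e. satisfies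
`f (x + y + z) = f x + f y + f z` with coordinatewise addition mod 2 (xor), is continuous,
and hence depends on only finitely many coordinates.  Here `2 = Bool` is discrete,
`ℕ → Bool` carries the product topology, and `f` is Borel iff `f ⁻¹' {true}` is Borel
(equivalently, measurable for the product σ-algebra). -/
theorem borel_affine_continuous_and_finitary
    (f : (ℕ → Bool) → Bool)
    (hBorel : MeasurableSet {x : ℕ → Bool | f x = true})
    (hAff : ∀ x y z : ℕ → Bool,
      f (fun i => xor (x i) (xor (y i) (z i))) = xor (f x) (xor (f y) (f z))) :
    Continuous f ∧
    ∃ s : Finset ℕ, ∀ x y : ℕ → Bool, (∀ i ∈ s, x i = y i) → f x = f y := by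
  suffices hc : Continuous f from ⟨hc, BorelAffineAux.finitary_of_continuous f hc⟩
  -- the associated additive character
  set g : (ℕ → Bool) → Bool := fun x => xor (f x) (f 0) with hg
  have hadd : ∀ x y : ℕ → Bool, g (x + y) = xor (g x) (g y) := by
    intro x y
    have h0 : (x + y) = fun i => xor (x i) (xor (y i) ((0 : ℕ → Bool) i)) := by
      funext i
      show xor (x i) (y i) = xor (x i) (xor (y i) ((0 : ℕ → Bool) i))
      cases x i <;> cases y i <;> rfl
    have := hAff x y 0
    rw [← h0] at this
    simp only [hg, this]
    cases f x <;> cases f y <;> cases f 0 <;> rfl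
  -- the kernel of g
  set K : Set (ℕ → Bool) := {x | g x = false} with hK
  have hKmeas : MeasurableSet K := by
    by_cases h : f 0 = true
    · have : K = {x : ℕ → Bool | f x = true} := by
        ext x
        simp only [hK, hg, Set.mem_setOf_eq, h]
        cases f x <;> simp
      rw [this]; exact hBorel
    · rw [Bool.not_eq_true] at h
      have : K = {x : ℕ → Bool | f x = true}ᶜ := by
        ext x
        simp only [hK, hg, Set.mem_setOf_eq, Set.mem_compl_iff, h]
        cases f x <;> simp
      rw [this]; exact hBorel.compl
  -- it suffices to show the kernel is open
  suffices hKopen : IsOpen K by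
    have hgc : Continuous g := by
      rw [continuous_discrete_rng]
      intro b
      cases b
      · exact hKopen
      · by_cases hex : ∃ a, g a = true
        · obtain ⟨a, ha⟩ := hex
          have : g ⁻¹' {true} = (fun x => a + x) ⁻¹' K := by
            ext x
            simp only [Set.mem_preimage, Set.mem_singleton_iff, hK, Set.mem_setOf_eq,
              hadd a x, ha]
            cases g x <;> simp
          rw [this]
          exact hKopen.preimage (continuous_const.add continuous_id)
        · have : g ⁻¹' {true} = ∅ := by
            ext x
            simp only [Set.mem_preimage, Set.mem_singleton_iff, Set.mem_empty_iff_false,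
              iff_false]
            exact fun h => hex ⟨x, h⟩
          rw [this]; exact isOpen_empty
    have hfg : f = (fun b => xor b (f 0)) ∘ g := by
      funext x
      simp only [Function.comp_apply, hg]
      cases f x <;> cases f 0 <;> rfl
    rw [hfg]
    exact continuous_of_discreteTopology.comp hgc
  -- two cases: g trivial, or surjective
  by_cases hex : ∃ a, g a = true
  · -- K has positive Haar measure, so by Steinhaus K - K ⊆ K is a nbhd of 0
    obtain ⟨a, ha⟩ := hex
    set μ : Measure (ℕ → Bool) := Measure.addHaarMeasure default with hμ
    haveI hHaar : μ.IsAddHaarMeasure := Measure.isAddHaarMeasure_addHaarMeasure _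
    have hKc : Kᶜ = (fun x => a + x) ⁻¹' K := by
      ext x
      simp only [Set.mem_compl_iff, Set.mem_preimage, hK, Set.mem_setOf_eq, hadd a x, ha]
      cases g x <;> simp
    have hμKc : μ Kᶜ = μ K := by
      rw [hKc]
      exact measure_preimage_add μ a K
    have hKpos : 0 < μ K := by
      by_contra hle
      push_neg at hle
      have hK0 : μ K = 0 := le_antisymm hle zero_le
      have huniv : μ Set.univ = 0 := by
        have := measure_union_le (μ := μ) K Kᶜ
        rw [Set.union_compl_self, hK0, hμKc, hK0] at this
        simpa using this
      exact (isOpen_univ.measure_pos μ Set.univ_nonempty).ne' huniv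
    have hsub : K - K ⊆ K := by
      intro z hz
      rw [Set.mem_sub] at hz
      obtain ⟨x, hx, y, hy, rfl⟩ := hz
      have hxy : x - y = x + y := rfl
      show g (x - y) = false
      rw [hxy, hadd x y, hx, hy]
      rfl
    have hnhds : K ∈ nhds (0 : ℕ → Bool) :=
      Filter.mem_of_superset
        (Measure.sub_mem_nhds_zero_of_addHaar_pos μ K hKmeas hKpos) hsub
    -- K is a subgroup-like set which is a neighborhood of 0, hence open
    rw [isOpen_iff_mem_nhds]
    intro k hk
    have hk' : g k = false := hk
    have hKpre : K = (fun x => x + k) ⁻¹' K := by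
      ext x
      simp only [Set.mem_preimage, hK, Set.mem_setOf_eq, hadd x k, hk']
      cases g x <;> simp
    have h00 : k + k = (0 : ℕ → Bool) := by
      funext i
      exact Bool.xor_self (k i)
    rw [hKpre]
    exact (continuous_id.add continuous_const).continuousAt.preimage_mem_nhds
      (by show K ∈ nhds (k + k); rw [h00]; exact hnhds)
  · have : K = Set.univ := by
      ext x
      simp only [hK, Set.mem_setOf_eq, Set.mem_univ, iff_true]
      cases h : g x
      · rfl
      · exact absurd ⟨x, h⟩ hex
    rw [this]; exact isOpen_univ
end

section
/- There are exactly three Borel clones whose finitary restriction is the set of all finitary Boolean functions f with f(0⃗) = 0, namely: (i) all Borel f (arities 1 ≤ n ≤ ω) with f(0⃗) = 0; (ii) all Borel f vanishing on a neighborhood of 0⃗; (iii) all continuous f with f(0⃗) = 0. -/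
open scoped Classical

/-- An arity: `some n` is the finite arity `n ≥ 1`; `none` is the countably infinite arity ω. -/
abbrev Arity := Option ℕ+

/-- The index set of an arity. -/
abbrev Idx : Arity → Type
  | some n => Fin (n : ℕ)
  | none => ℕ

/-- A Boolean function of some arity `1 ≤ n ≤ ω`.  The input space `Idx a → Bool`
carries the product topology (with `Bool` discrete), the product σ-algebra (= Borel),
and the coordinatewise partial order. -/
abbrev BFun : Type := Σ a : Arity, (Idx a → Bool) → Bool

/-- A clone: a set of Boolean functions of arities `1 ≤ n ≤ ω` containing all projections
and closed under composition. -/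
structure IsClone (F : Set BFun) : Prop where
  proj : ∀ (a : Arity) (i : Idx a), (⟨a, fun x => x i⟩ : BFun) ∈ F
  comp : ∀ (a b : Arity) (g : (Idx a → Bool) → Bool) (f : Idx a → (Idx b → Bool) → Bool),
      (⟨a, g⟩ : BFun) ∈ F → (∀ i, (⟨b, f i⟩ : BFun) ∈ F) →
      (⟨b, fun x => g fun i => f i x⟩ : BFun) ∈ F

/-- The clone generated by a set of Boolean functions. -/
def cloneGen (G : Set BFun) : Set BFun := ⋂₀ {F : Set BFun | IsClone F ∧ G ⊆ F}

/-- `f` has finite arity. -/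
def finitary (f : BFun) : Prop := f.1 ≠ none

/-- `f` is Borel: the preimage of `1` is a Borel set. -/
def IsBorelFun (f : BFun) : Prop := MeasurableSet {x | f.2 x = true}

/-- `f` is continuous (equivalently, depends on only finitely many coordinates). -/
def IsContFun (f : BFun) : Prop := Continuous f.2

/-- `f(0⃗) = 0`. -/
def PresBot (f : BFun) : Prop := f.2 (fun _ => false) = false

/-- `f(1⃗) = 1`. -/
def PresTop (f : BFun) : Prop := f.2 (fun _ => true) = true

/-- `f` vanishes on a neighborhood of `0⃗`, i.e. `0⃗` is not in the closure of `f⁻¹(1)`. -/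
def VanishNearBot (f : BFun) : Prop := (fun _ => false) ∉ closure {x | f.2 x = true}

/-- `f` equals `1` on a neighborhood of `1⃗`, i.e. `1⃗` is not in the closure of `f⁻¹(0)`. -/
def OneNearTop (f : BFun) : Prop := (fun _ => true) ∉ closure {x | f.2 x = false}

/-- Countably infinite disjunction `⋁ : 2^ω → 2`. -/
noncomputable def bigOr : (ℕ → Bool) → Bool := fun x => decide (∃ i, x i = true)

/-- Countably infinite conjunction `⋀ : 2^ω → 2`. -/
noncomputable def bigAnd : (ℕ → Bool) → Bool := fun x => decide (∀ i, x i = true)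

/-- `liminf : 2^ω → 2`, equal to `1` iff all but finitely many bits are `1`. -/
noncomputable def liminfF : (ℕ → Bool) → Bool := fun x => decide (∃ N, ∀ j, N ≤ j → x j = true)

def BorelClass : Set BFun := {f | IsBorelFun f}

def finRes (F : Set BFun) : Set BFun := {f ∈ F | finitary f}

namespace BCproof

open Set

/-! ### generic helpers -/

instance idxCountable (a : Arity) : Countable (Idx a) := by cases a <;> exact inferInstance

lemma decide_congr {p : Prop} [Decidable p] {b : Bool} (h : p ↔ b = true) : decide p = b := by
  cases hb : b with
  | false => exact decide_eq_false fun hp => by simpa [hb] using h.1 hp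
  | true => exact decide_eq_true (h.2 hb)

lemma boolSet_meas (s : Set Bool) : MeasurableSet s := s.to_countable.measurableSet

lemma measurable_of_pre {a : Arity} {f : (Idx a → Bool) → Bool}
    (h : MeasurableSet {x | f x = true}) : Measurable f := by
  intro t ht
  by_cases h1 : true ∈ t <;> by_cases h2 : false ∈ t
  · have : f ⁻¹' t = Set.univ := by ext x; cases hx : f x <;> simp [hx, h1, h2]
    rw [this]; exact MeasurableSet.univ
  · have : f ⁻¹' t = {x | f x = true} := by ext x; cases hx : f x <;> simp [hx, h1, h2]
    rw [this]; exact h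
  · have : f ⁻¹' t = {x | f x = true}ᶜ := by ext x; cases hx : f x <;> simp [hx, h1, h2]
    rw [this]; exact h.compl
  · have : f ⁻¹' t = ∅ := by ext x; cases hx : f x <;> simp [hx, h1, h2]
    rw [this]; exact MeasurableSet.empty

lemma pre_of_measurable {a : Arity} {f : (Idx a → Bool) → Bool}
    (h : Measurable f) : MeasurableSet {x | f x = true} :=
  h (boolSet_meas {true})

lemma isOpen_eqOn {ι : Type*} (T : Finset ι) (y : ι → Bool) :
    IsOpen {x : ι → Bool | ∀ j ∈ T, x j = y j} := by
  have : {x : ι → Bool | ∀ j ∈ T, x j = y j} = ⋂ j ∈ T, {x : ι → Bool | x j = y j} := by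
    ext x; simp
  rw [this]
  refine isOpen_biInter_finset fun j _ => ?_
  have : {x : ι → Bool | x j = y j} = (fun x : ι → Bool => x j) ⁻¹' {y j} := by ext x; simp
  rw [this]
  exact (continuous_apply j).isOpen_preimage _ (isOpen_discrete _)

lemma pi_induct {ι : Type*} (P : Set (ι → Bool) → Prop) (h0 : P ∅)
    (hgen : ∀ i : ι, P {x | x i = true})
    (hc : ∀ A, P A → P Aᶜ)
    (hU : ∀ s : ℕ → Set (ι → Bool), (∀ n, P (s n)) → P (⋃ n, s n)) :
    ∀ A : Set (ι → Bool), MeasurableSet A → P A := by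
  intro A hA
  let m : MeasurableSpace (ι → Bool) := ⟨P, h0, hc, hU⟩
  have hle : (MeasurableSpace.pi : MeasurableSpace (ι → Bool)) ≤ m := by
    refine iSup_le fun i => ?_
    intro s hs
    obtain ⟨t, -, rfl⟩ := hs
    show P ((fun x : ι → Bool => x i) ⁻¹' t)
    by_cases h1 : true ∈ t <;> by_cases h2 : false ∈ t
    · have : (fun x : ι → Bool => x i) ⁻¹' t = (∅ : Set (ι → Bool))ᶜ := by
        rw [Set.compl_empty]
        refine Set.eq_univ_of_forall fun x => ?_
        show x i ∈ t
        cases hx : x i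
        · exact hx ▸ h2
        · exact hx ▸ h1
      rw [this]; exact hc _ h0
    · have : (fun x : ι → Bool => x i) ⁻¹' t = {x | x i = true} := by
        ext x; cases hx : x i <;> simp [hx, h1, h2]
      rw [this]; exact hgen i
    · have : (fun x : ι → Bool => x i) ⁻¹' t = {x | x i = true}ᶜ := by
        ext x; cases hx : x i <;> simp [hx, h1, h2]
      rw [this]; exact hc _ (hgen i)
    · have : (fun x : ι → Bool => x i) ⁻¹' t = ∅ := by
        ext x; cases hx : x i <;> simp [hx, h1, h2]
      rw [this]; exact h0
  exact hle A hA

lemma factor_of_continuous {f : (ℕ → Bool) → Bool} (hf : Continuous f) :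
    ∃ n : ℕ, ∀ x y : ℕ → Bool, (∀ i < n, x i = y i) → f x = f y := by
  by_contra h
  push_neg at h
  set C : ℕ → Set ((ℕ → Bool) × (ℕ → Bool)) :=
    fun n => {p | (∀ i < n, p.1 i = p.2 i) ∧ f p.1 ≠ f p.2} with hC
  have hclosed : ∀ n, IsClosed (C n) := by
    intro n
    have h1 : IsClosed {p : (ℕ → Bool) × (ℕ → Bool) | ∀ i < n, p.1 i = p.2 i} := by
      have : {p : (ℕ → Bool) × (ℕ → Bool) | ∀ i < n, p.1 i = p.2 i} =
          ⋂ i ∈ Finset.range n, {p : (ℕ → Bool) × (ℕ → Bool) | p.1 i = p.2 i} := by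
        ext p; simp
      rw [this]
      refine isClosed_biInter fun i _ => ?_
      have : {p : (ℕ → Bool) × (ℕ → Bool) | p.1 i = p.2 i} =
          (fun p : (ℕ → Bool) × (ℕ → Bool) => (p.1 i, p.2 i)) ⁻¹' {q : Bool × Bool | q.1 = q.2} := by
        ext p; simp
      rw [this]
      exact IsClosed.preimage (Continuous.prodMk
        ((continuous_apply i).comp continuous_fst)
        ((continuous_apply i).comp continuous_snd)) (isClosed_discrete _)
    have h2 : IsClosed {p : (ℕ → Bool) × (ℕ → Bool) | f p.1 ≠ f p.2} := by
      have : {p : (ℕ → Bool) × (ℕ → Bool) | f p.1 ≠ f p.2} =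
          (fun p : (ℕ → Bool) × (ℕ → Bool) => (f p.1, f p.2)) ⁻¹' {q : Bool × Bool | q.1 ≠ q.2} := by
        ext p; simp
      rw [this]
      exact IsClosed.preimage (Continuous.prodMk
        (hf.comp continuous_fst) (hf.comp continuous_snd)) (isClosed_discrete _)
    exact h1.inter h2
  have hmono : ∀ n, C (n + 1) ⊆ C n := by
    intro n p hp
    exact ⟨fun i hi => hp.1 i (Nat.lt_succ_of_lt hi), hp.2⟩
  have hne : ∀ n, (C n).Nonempty := by
    intro n
    obtain ⟨x, y, hxy, hne⟩ := h n
    exact ⟨(x, y), hxy, hne⟩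
  have hcap := IsCompact.nonempty_iInter_of_sequence_nonempty_isCompact_isClosed
    C hmono hne ((hclosed 0).isCompact) hclosed
  obtain ⟨p, hp⟩ := hcap
  have heq : p.1 = p.2 := by
    funext i
    exact (Set.mem_iInter.1 hp (i + 1)).1 i (Nat.lt_succ_self i)
  exact ((Set.mem_iInter.1 hp 0).2 (by rw [heq]))

lemma exists_closure_of_not_isOpen {X : Type*} [TopologicalSpace X] {S : Set X}
    (h : ¬ IsOpen S) : ∃ p ∈ S, p ∈ closure Sᶜ := by
  rw [isOpen_iff_mem_nhds] at h
  push_neg at h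
  obtain ⟨p, hpS, hpn⟩ := h
  refine ⟨p, hpS, ?_⟩
  rw [mem_closure_iff_nhds]
  intro t ht
  rcases Set.eq_empty_or_nonempty (t ∩ Sᶜ) with he | hne
  · exact absurd (Filter.mem_of_superset ht (fun x hx => by
      by_contra hxS
      exact Set.eq_empty_iff_forall_notMem.1 he x ⟨hx, hxS⟩)) hpn
  · exact hne

/-! ### the three clones -/

lemma isBorelFun_iff {a : Arity} {f : (Idx a → Bool) → Bool} :
    IsBorelFun ⟨a, f⟩ ↔ Measurable f := ⟨measurable_of_pre, pre_of_measurable⟩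

lemma vanish_iff {a : Arity} {f : (Idx a → Bool) → Bool} :
    VanishNearBot ⟨a, f⟩ ↔
      ∃ T : Finset (Idx a), ∀ x, (∀ j ∈ T, x j = false) → f x = false := by
  have hrw : VanishNearBot ⟨a, f⟩ ↔
      (fun _ => false) ∉ closure {x : Idx a → Bool | f x = true} := Iff.rfl
  rw [hrw]
  constructor
  · intro h
    rw [mem_closure_iff] at h
    push_neg at h
    obtain ⟨o, ho, h0, hdisj⟩ := h
    obtain ⟨I, u, hu, hsub⟩ := isOpen_pi_iff.1 ho _ h0
    refine ⟨I, fun x hx => ?_⟩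
    by_contra hfx
    have hxA : x ∈ {y : Idx a → Bool | f y = true} := by
      simp only [Set.mem_setOf_eq]
      cases hv : f x
      · exact absurd hv hfx
      · rfl
    have hxo : x ∈ o := by
      apply hsub
      intro i hi
      have := (hu i (by simpa using hi)).2
      rw [hx i (by simpa using hi)]
      exact this
    have hne : (o ∩ {y : Idx a → Bool | f y = true}).Nonempty := ⟨x, hxo, hxA⟩
    rw [Set.nonempty_iff_ne_empty] at hne
    exact hne hdisj
  · rintro ⟨T, hT⟩
    rw [mem_closure_iff]
    push_neg
    refine ⟨{x | ∀ j ∈ T, x j = false}, isOpen_eqOn T (fun _ => false), fun j _ => rfl, ?_⟩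
    rw [← Set.not_nonempty_iff_eq_empty]
    rintro ⟨x, hx1, hx2⟩
    have := hT x hx1
    rw [Set.mem_setOf_eq] at hx2
    rw [hx2] at this
    exact absurd this (by simp)

lemma presBot_of_vanish {a : Arity} {f : (Idx a → Bool) → Bool}
    (h : VanishNearBot ⟨a, f⟩) : PresBot ⟨a, f⟩ := by
  show f (fun _ => false) = false
  cases hv : f (fun _ => false)
  · rfl
  · exact absurd (subset_closure (s := {x | f x = true}) hv) h

lemma finitary_borel {a : Arity} (h : a ≠ none) (f : (Idx a → Bool) → Bool) :
    IsBorelFun ⟨a, f⟩ := by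
  cases a with
  | none => exact absurd rfl h
  | some n => exact (Set.to_countable _).measurableSet

lemma finitary_cont {a : Arity} (h : a ≠ none) (f : (Idx a → Bool) → Bool) :
    IsContFun ⟨a, f⟩ := by
  cases a with
  | none => exact absurd rfl h
  | some n => exact continuous_of_discreteTopology

lemma cont_borel {a : Arity} {f : (Idx a → Bool) → Bool} (hc : Continuous f) :
    IsBorelFun ⟨a, f⟩ := by
  have : {x | f x = true} = f ⁻¹' {true} := by ext x; simp
  show MeasurableSet {x | f x = true}
  rw [this]
  exact (hc.isOpen_preimage _ (isOpen_discrete _)).measurableSet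

lemma cont_presBot_vanish {a : Arity} {f : (Idx a → Bool) → Bool}
    (hc : Continuous f) (hp : PresBot ⟨a, f⟩) : VanishNearBot ⟨a, f⟩ := by
  intro hmem
  have hcl : IsClosed {x | f x = true} := by
    have : {x | f x = true} = f ⁻¹' {true} := by ext x; simp
    rw [this]
    exact IsClosed.preimage hc (isClosed_discrete _)
  rw [hcl.closure_eq] at hmem
  rw [Set.mem_setOf_eq] at hmem
  rw [show f (fun _ => false) = false from hp] at hmem
  exact absurd hmem (by simp)

lemma cloneB : IsClone {f : BFun | IsBorelFun f ∧ PresBot f} where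
  proj a i := ⟨pre_of_measurable (measurable_pi_apply i), rfl⟩
  comp a b g f hg hf := by
    refine ⟨?_, ?_⟩
    · exact pre_of_measurable ((measurable_of_pre hg.1).comp
        (measurable_pi_lambda _ fun i => measurable_of_pre (hf i).1))
    · show g (fun i => f i (fun _ => false)) = false
      have : (fun i => f i (fun _ => false)) = (fun _ => false) := funext fun i => (hf i).2
      rw [this]; exact hg.2

lemma cloneV : IsClone {f : BFun | IsBorelFun f ∧ VanishNearBot f} where
  proj a i := by
    refine ⟨pre_of_measurable (measurable_pi_apply i), vanish_iff.2 ⟨{i}, fun x hx => ?_⟩⟩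
    exact hx i (Finset.mem_singleton_self i)
  comp a b g f hg hf := by
    refine ⟨pre_of_measurable ((measurable_of_pre hg.1).comp
        (measurable_pi_lambda _ fun i => measurable_of_pre (hf i).1)), ?_⟩
    obtain ⟨Tg, hTg⟩ := vanish_iff.1 hg.2
    have hTf : ∀ i, ∃ T : Finset (Idx b), ∀ x, (∀ j ∈ T, x j = false) → f i x = false :=
      fun i => vanish_iff.1 (hf i).2
    choose Tf hTf using hTf
    refine vanish_iff.2 ⟨Tg.biUnion Tf, fun x hx => ?_⟩
    apply hTg
    intro i hi
    exact hTf i x fun k hk => hx k (Finset.mem_biUnion.2 ⟨i, hi, hk⟩)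

lemma cloneC : IsClone {f : BFun | IsContFun f ∧ PresBot f} where
  proj a i := ⟨continuous_apply i, rfl⟩
  comp a b g f hg hf := by
    refine ⟨hg.1.comp (continuous_pi fun i => (hf i).1), ?_⟩
    show g (fun i => f i (fun _ => false)) = false
    have : (fun i => f i (fun _ => false)) = (fun _ => false) := funext fun i => (hf i).2
    rw [this]; exact hg.2

lemma frB : finRes {f : BFun | IsBorelFun f ∧ PresBot f} = {f | finitary f ∧ PresBot f} := by
  ext ⟨a, f⟩
  constructor
  · rintro ⟨⟨-, hp⟩, hfin⟩; exact ⟨hfin, hp⟩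
  · rintro ⟨hfin, hp⟩; exact ⟨⟨finitary_borel hfin f, hp⟩, hfin⟩

lemma frV : finRes {f : BFun | IsBorelFun f ∧ VanishNearBot f} = {f | finitary f ∧ PresBot f} := by
  ext ⟨a, f⟩
  constructor
  · rintro ⟨⟨-, hv⟩, hfin⟩; exact ⟨hfin, presBot_of_vanish hv⟩
  · rintro ⟨hfin, hp⟩
    exact ⟨⟨finitary_borel hfin f, cont_presBot_vanish (finitary_cont hfin f) hp⟩, hfin⟩

lemma frC : finRes {f : BFun | IsContFun f ∧ PresBot f} = {f | finitary f ∧ PresBot f} := by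
  ext ⟨a, f⟩
  constructor
  · rintro ⟨⟨-, hp⟩, hfin⟩; exact ⟨hfin, hp⟩
  · rintro ⟨hfin, hp⟩; exact ⟨⟨finitary_cont hfin f, hp⟩, hfin⟩

lemma csubB : {f : BFun | IsContFun f ∧ PresBot f} ⊆ BorelClass :=
  fun ⟨a, f⟩ hf => cont_borel hf.1

lemma csubV : {f : BFun | IsContFun f ∧ PresBot f} ⊆ {f : BFun | IsBorelFun f ∧ VanishNearBot f} :=
  fun ⟨a, f⟩ hf => ⟨cont_borel hf.1, cont_presBot_vanish hf.1 hf.2⟩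

/-! ### distinguishing members -/

lemma bigOr_mem_B : (⟨none, bigOr⟩ : BFun) ∈ {f : BFun | IsBorelFun f ∧ PresBot f} := by
  constructor
  · show MeasurableSet {x | bigOr x = true}
    have : {x : ℕ → Bool | bigOr x = true} = ⋃ i, {x | x i = true} := by
      ext x; simp [bigOr]
    rw [this]
    exact MeasurableSet.iUnion fun i => pre_of_measurable (a := none) (measurable_pi_apply i)
  · show bigOr (fun _ => false) = false
    simp [bigOr]

lemma bigOr_not_vanish : ¬ VanishNearBot (⟨none, bigOr⟩ : BFun) := by
  intro hv
  obtain ⟨T, hT⟩ := vanish_iff.1 hv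
  obtain ⟨m, hmt⟩ := T.exists_notMem
  have h1 : bigOr (fun j => decide (j = m)) = false := by
    apply hT
    intro j hj
    exact decide_eq_false fun he => hmt (he ▸ hj)
  have h2 : bigOr (fun j => decide (j = m)) = true := by
    apply decide_eq_true
    exact ⟨m, decide_eq_true rfl⟩
  rw [h1] at h2
  exact absurd h2 (by simp)

lemma bigAnd_mem_V : (⟨none, bigAnd⟩ : BFun) ∈ {f : BFun | IsBorelFun f ∧ VanishNearBot f} := by
  constructor
  · show MeasurableSet {x | bigAnd x = true}
    have : {x : ℕ → Bool | bigAnd x = true} = ⋂ i, {x | x i = true} := by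
      ext x; simp [bigAnd]
    rw [this]
    exact MeasurableSet.iInter fun i => pre_of_measurable (a := none) (measurable_pi_apply i)
  · refine vanish_iff.2 ⟨{0}, fun x hx => ?_⟩
    apply decide_eq_false
    intro hall
    have := hall 0
    rw [hx 0 (Finset.mem_singleton_self 0)] at this
    exact absurd this (by simp)

lemma bigAnd_not_cont : ¬ IsContFun (⟨none, bigAnd⟩ : BFun) := by
  intro hc
  have hopen : IsOpen {x : ℕ → Bool | bigAnd x = true} := by
    have : {x : ℕ → Bool | bigAnd x = true} = bigAnd ⁻¹' {true} := by ext x; simp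
    rw [this]
    exact hc.isOpen_preimage _ (isOpen_discrete _)
  have hmem : (fun _ => true) ∈ {x : ℕ → Bool | bigAnd x = true} :=
    decide_eq_true fun i => rfl
  obtain ⟨I, u, hu, hsub⟩ := isOpen_pi_iff.1 hopen _ hmem
  obtain ⟨m, hmI⟩ := I.exists_notMem
  have hx : (fun j => decide (j ∈ I)) ∈ (I : Set ℕ).pi u := by
    intro i hi
    have hit : decide (i ∈ I) = true := decide_eq_true (by simpa using hi)
    simp only [hit]
    exact (hu i (by simpa using hi)).2
  have := hsub hx
  rw [Set.mem_setOf_eq] at this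
  have hall := of_decide_eq_true this
  have hm2 : decide (m ∈ I) = true := hall m
  rw [decide_eq_false hmI] at hm2
  exact absurd hm2 (by simp)

/-! ### abstract clone machinery -/

/-- positive natural from a natural -/
def pn (k : ℕ) : ℕ+ := ⟨k + 1, Nat.succ_pos k⟩

variable {F : Set BFun}

lemma mem_congr {a : Arity} {f g : (Idx a → Bool) → Bool} (h : (⟨a, f⟩ : BFun) ∈ F)
    (e : ∀ x, f x = g x) : (⟨a, g⟩ : BFun) ∈ F := by
  have : f = g := funext e
  exact this ▸ h

section Clone

variable (hF : IsClone F) (hfr : finRes F = {f | finitary f ∧ PresBot f})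
include hF hfr

lemma mem_fin {k : ℕ} (g : (Fin (k + 1) → Bool) → Bool)
    (hg : g (fun _ => false) = false) : (⟨some (pn k), g⟩ : BFun) ∈ F := by
  have : (⟨some (pn k), g⟩ : BFun) ∈ finRes F := by
    rw [hfr]
    exact ⟨by simp [finitary], hg⟩
  exact this.1

lemma presBot_mem {a : Arity} {f : (Idx a → Bool) → Bool}
    (hf : (⟨a, f⟩ : BFun) ∈ F) : f (fun _ => false) = false := by
  have h1 := hF.comp a (some (pn 0)) f (fun _ => fun x => x ⟨0, Nat.one_pos⟩) hf
    (fun _ => hF.proj (some (pn 0)) ⟨0, Nat.one_pos⟩)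
  have h2 : (⟨some (pn 0), fun x => f fun _ => x ⟨0, Nat.one_pos⟩⟩ : BFun) ∈ finRes F :=
    ⟨h1, by simp [finitary]⟩
  rw [hfr] at h2
  exact h2.2

lemma cont_mem {a : Arity} {f : (Idx a → Bool) → Bool}
    (hc : Continuous f) (hp : f (fun _ => false) = false) : (⟨a, f⟩ : BFun) ∈ F := by
  cases a with
  | some n =>
    have : (⟨some n, f⟩ : BFun) ∈ finRes F := by
      rw [hfr]
      exact ⟨by simp [finitary], hp⟩
    exact this.1
  | none =>
    obtain ⟨n, hn⟩ := factor_of_continuous hc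
    set g : (Fin (n + 1) → Bool) → Bool :=
      fun v => f (fun i => if h : i < n + 1 then v ⟨i, h⟩ else false) with hgdef
    have hg0 : g (fun _ => false) = false := by
      rw [hgdef]
      have : (fun i : ℕ => if h : i < n + 1 then (false : Bool) else false) =
          (fun _ : ℕ => false) := by funext i; split <;> rfl
      simpa [this] using hp
    have hgF := mem_fin hF hfr g hg0
    have hcomp := hF.comp (some (pn n)) none g (fun i => fun x => x (i : ℕ)) hgF
      (fun i => hF.proj none (i : ℕ))
    refine mem_congr hcomp fun x => ?_
    rw [hgdef]
    apply hn
    intro i hi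
    simp [Nat.lt_succ_of_lt hi]

/-! the key infinitary combination functions -/

end Clone

/-- `w(z,y) = z ∧ ⋁ y` in the encoding where coordinate `0` is `z`. -/
noncomputable def wF : (ℕ → Bool) → Bool := fun v => v 0 && decide (∃ i : ℕ, v (i + 1) = true)

/-- `U_A(z,x) = z ∧ 1_A(x)` in the same encoding. -/
noncomputable def UA (A : Set (ℕ → Bool)) : (ℕ → Bool) → Bool :=
  fun v => v 0 && decide ((fun n => v (n + 1)) ∈ A)

lemma bool_eq_of_iff {a b : Bool} (h : (a = true) ↔ (b = true)) : a = b :=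
  Bool.eq_iff_iff.2 h

lemma UA_eq_true_iff (A : Set (ℕ → Bool)) (v : ℕ → Bool) :
    UA A v = true ↔ (v 0 = true ∧ (fun n => v (n + 1)) ∈ A) := by
  constructor
  · intro h
    have h' : (v 0 && decide ((fun n => v (n + 1)) ∈ A)) = true := h
    rw [Bool.and_eq_true] at h'
    exact ⟨h'.1, of_decide_eq_true h'.2⟩
  · rintro ⟨h0, hm⟩
    show (v 0 && decide ((fun n => v (n + 1)) ∈ A)) = true
    rw [h0, decide_eq_true hm]
    rfl

lemma UA_empty (v : ℕ → Bool) : UA ∅ v = false := by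
  cases h : UA ∅ v with
  | false => rfl
  | true => exact absurd ((UA_eq_true_iff _ _).1 h).2 (Set.notMem_empty _)

lemma UA_gen (i : ℕ) (v : ℕ → Bool) : UA {x | x i = true} v = (v 0 && v (i + 1)) := by
  apply bool_eq_of_iff
  rw [UA_eq_true_iff, Bool.and_eq_true]
  exact Iff.rfl

lemma UA_compl (A : Set (ℕ → Bool)) (v : ℕ → Bool) : UA Aᶜ v = (v 0 && !(UA A v)) := by
  apply bool_eq_of_iff
  rw [UA_eq_true_iff, Bool.and_eq_true, Bool.not_eq_true']
  constructor
  · rintro ⟨h0, hm⟩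
    refine ⟨h0, ?_⟩
    cases h : UA A v with
    | false => rfl
    | true => exact absurd ((UA_eq_true_iff _ _).1 h).2 hm
  · rintro ⟨h0, hA⟩
    refine ⟨h0, fun hm => ?_⟩
    rw [(UA_eq_true_iff A v).2 ⟨h0, hm⟩] at hA
    exact absurd hA (by simp)

lemma UA_union (s : ℕ → Set (ℕ → Bool)) (v : ℕ → Bool) :
    UA (⋃ n, s n) v = (v 0 && decide (∃ i : ℕ, UA (s i) v = true)) := by
  apply bool_eq_of_iff
  rw [UA_eq_true_iff, Bool.and_eq_true, decide_eq_true_eq]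
  constructor
  · rintro ⟨h0, hm⟩
    obtain ⟨i, hi⟩ := Set.mem_iUnion.1 hm
    exact ⟨h0, i, (UA_eq_true_iff _ _).2 ⟨h0, hi⟩⟩
  · rintro ⟨h0, i, hi⟩
    exact ⟨h0, Set.mem_iUnion.2 ⟨i, ((UA_eq_true_iff _ _).1 hi).2⟩⟩

section Clone2

variable (hF : IsClone F) (hfr : finRes F = {f | finitary f ∧ PresBot f})
include hF hfr

lemma UA_mem (hw : (⟨none, wF⟩ : BFun) ∈ F) :
    ∀ A : Set (ℕ → Bool), MeasurableSet A → (⟨none, UA A⟩ : BFun) ∈ F := by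
  refine pi_induct _ ?_ ?_ ?_ ?_
  · -- empty set
    have c1 : (⟨some (pn 0), fun _ : Fin 1 → Bool => false⟩ : BFun) ∈ F :=
      mem_fin hF hfr _ rfl
    have hcomp := hF.comp (some (pn 0)) none (fun _ => false)
      (fun _ => fun v : ℕ → Bool => v 0) c1 (fun _ => hF.proj none 0)
    refine mem_congr hcomp fun v => ?_
    exact (UA_empty v).symm
  · -- generators
    intro i
    have c2 : (⟨some (pn 1), fun u : Fin 2 → Bool => u 0 && u 1⟩ : BFun) ∈ F :=
      mem_fin hF hfr _ rfl
    have hcomp := hF.comp (some (pn 1)) none (fun u : Fin 2 → Bool => u 0 && u 1)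
      (fun k => fun v : ℕ → Bool => v (if (k : ℕ) = 0 then 0 else i + 1)) c2
      (fun k => hF.proj none _)
    refine mem_congr hcomp fun v => ?_
    exact (UA_gen i v).symm
  · -- complement
    intro A hA
    have c3 : (⟨some (pn 1), fun u : Fin 2 → Bool => u 0 && !u 1⟩ : BFun) ∈ F :=
      mem_fin hF hfr _ rfl
    have hcomp := hF.comp (some (pn 1)) none (fun u : Fin 2 → Bool => u 0 && !u 1)
      (fun k => if (k : ℕ) = 0 then (fun v : ℕ → Bool => v 0) else UA A) c3
      (fun k => by
        by_cases hk : (k : ℕ) = 0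
        · show (⟨none, if (k : ℕ) = 0 then (fun v : ℕ → Bool => v 0) else UA A⟩ : BFun) ∈ F
          rw [if_pos hk]
          exact hF.proj none 0
        · show (⟨none, if (k : ℕ) = 0 then (fun v : ℕ → Bool => v 0) else UA A⟩ : BFun) ∈ F
          rw [if_neg hk]
          exact hA)
    refine mem_congr hcomp fun v => ?_
    exact (UA_compl A v).symm
  · -- countable unions
    intro s hs
    have hcomp := hF.comp none none wF
      (fun k => Nat.rec (motive := fun _ => (ℕ → Bool) → Bool)
        (fun v => v 0) (fun n _ => UA (s n)) k) hw
      (fun k => by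
        cases k with
        | zero => exact hF.proj none 0
        | succ n => exact hs n)
    refine mem_congr hcomp fun v => ?_
    exact (UA_union s v).symm

end Clone2

/-! ### derivations of `bigOr` and `wF` -/

lemma wF_eq (v : ℕ → Bool) : wF v = (v 0 && decide (∃ i : ℕ, v (i + 1) = true)) := rfl

/-- substitution functions used to derive `bigOr`. -/
noncomputable def Gor (X : ℕ → ℕ → Bool) (j : ℕ) (v : Fin (j + 1) → Bool) : Bool :=
  decide (∃ i : Fin (j + 1), v i = true ∧
    (∀ k : Fin (j + 1), k < i → v k = false) ∧ X (i : ℕ) j = true)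

noncomputable def tauor (X : ℕ → ℕ → Bool) (j : ℕ) (v : ℕ → Bool) : Bool :=
  Gor X j (fun k => v (k : ℕ))

lemma tauor_iff (X : ℕ → ℕ → Bool) (j : ℕ) (v : ℕ → Bool) :
    tauor X j v = true ↔ ∃ i : Fin (j + 1), v (i : ℕ) = true ∧
      (∀ k : Fin (j + 1), (k : ℕ) < (i : ℕ) → v (k : ℕ) = false) ∧ X (i : ℕ) j = true := by
  have : tauor X j v = decide (∃ i : Fin (j + 1), v (i : ℕ) = true ∧
      (∀ k : Fin (j + 1), (k : ℕ) < (i : ℕ) → v (k : ℕ) = false) ∧ X (i : ℕ) j = true) := rfl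
  rw [this, decide_eq_true_eq]

lemma Gor_presBot (X : ℕ → ℕ → Bool) (j : ℕ) : Gor X j (fun _ => false) = false := by
  apply decide_eq_false
  rintro ⟨i, hi, -, -⟩
  exact Bool.false_ne_true hi

/-- substitution functions used to derive `wF`. -/
noncomputable def Gw (p : ℕ → Bool) (X : ℕ → ℕ → Bool) (j : ℕ) (v : Fin (j + 2) → Bool) : Bool :=
  v ⟨0, Nat.succ_pos _⟩ && decide
    ((∃ i : Fin (j + 1), v i.succ = true ∧
        (∀ k : Fin (j + 1), k < i → v k.succ = false) ∧ X (i : ℕ) j = true) ∨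
      ((∀ i : Fin (j + 1), v i.succ = false) ∧ p j = true))

noncomputable def tauw (p : ℕ → Bool) (X : ℕ → ℕ → Bool) (j : ℕ) (v : ℕ → Bool) : Bool :=
  Gw p X j (fun k => v (k : ℕ))

lemma Gw_presBot (p : ℕ → Bool) (X : ℕ → ℕ → Bool) (j : ℕ) :
    Gw p X j (fun _ => false) = false := rfl

lemma tauw_iff (p : ℕ → Bool) (X : ℕ → ℕ → Bool) (j : ℕ) (v : ℕ → Bool) :
    tauw p X j v = true ↔ (v 0 = true ∧
      ((∃ i : Fin (j + 1), v ((i : ℕ) + 1) = true ∧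
          (∀ k : Fin (j + 1), (k : ℕ) < (i : ℕ) → v ((k : ℕ) + 1) = false) ∧
          X (i : ℕ) j = true) ∨
        ((∀ i : Fin (j + 1), v ((i : ℕ) + 1) = false) ∧ p j = true))) := by
  have : tauw p X j v = (v 0 && decide
      ((∃ i : Fin (j + 1), v ((i : ℕ) + 1) = true ∧
          (∀ k : Fin (j + 1), (k : ℕ) < (i : ℕ) → v ((k : ℕ) + 1) = false) ∧
          X (i : ℕ) j = true) ∨
        ((∀ i : Fin (j + 1), v ((i : ℕ) + 1) = false) ∧ p j = true))) := rfl
  rw [this, Bool.and_eq_true, decide_eq_true_eq]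

section Derive

variable (hF : IsClone F) (hfr : finRes F = {f | finitary f ∧ PresBot f})
include hF hfr

lemma derive_bigOr {f : (ℕ → Bool) → Bool} (hfF : (⟨none, f⟩ : BFun) ∈ F)
    (hcl : (fun _ => false) ∈ closure {x | f x = true}) :
    (⟨none, bigOr⟩ : BFun) ∈ F := by
  have hseq : ∀ n : ℕ, ∃ x : ℕ → Bool, (∀ j < n, x j = false) ∧ f x = true := by
    intro n
    obtain ⟨x, hxo, hxA⟩ := mem_closure_iff.1 hcl
      {x : ℕ → Bool | ∀ j ∈ Finset.range n, x j = false}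
      (isOpen_eqOn _ _) (fun j _ => rfl)
    exact ⟨x, fun j hj => hxo j (Finset.mem_range.2 hj), hxA⟩
  choose X hX1 hX2 using hseq
  have hτmem : ∀ j : ℕ, (⟨none, tauor X j⟩ : BFun) ∈ F := by
    intro j
    have hG : (⟨some (pn j), Gor X j⟩ : BFun) ∈ F := mem_fin hF hfr _ (Gor_presBot X j)
    exact hF.comp (some (pn j)) none (Gor X j) (fun k => fun v => v (k : ℕ)) hG
      (fun k => hF.proj none (k : ℕ))
  have hcomp := hF.comp none none f (fun j => tauor X j) hfF hτmem
  -- value computations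
  have hval : ∀ (y : ℕ → Bool) (hy : ∃ i : ℕ, y i = true) (j : ℕ),
      tauor X j y = X (Nat.find hy) j := by
    intro y hy j
    have hspec : y (Nat.find hy) = true := Nat.find_spec hy
    apply bool_eq_of_iff
    rw [tauor_iff]
    by_cases hij : Nat.find hy ≤ j
    · constructor
      · rintro ⟨i, hvi, hmin, hXi⟩
        have hle : Nat.find hy ≤ (i : ℕ) := Nat.find_min' hy hvi
        rcases Nat.lt_or_ge (Nat.find hy) (i : ℕ) with hlt | hge
        · exfalso
          have hk := hmin ⟨Nat.find hy, by omega⟩ (by simpa using hlt)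
          rw [hspec] at hk
          exact absurd hk (by simp)
        · have hii : (i : ℕ) = Nat.find hy := by omega
          rw [← hii]
          exact hXi
      · intro hX
        refine ⟨⟨Nat.find hy, by omega⟩, hspec, ?_, hX⟩
        intro k hk
        exact Bool.of_not_eq_true (Nat.find_min hy hk)
    · rw [hX1 (Nat.find hy) j (by omega)]
      constructor
      · rintro ⟨i, hvi, hmin, hXi⟩
        exfalso
        have hle : Nat.find hy ≤ (i : ℕ) := Nat.find_min' hy hvi
        have : (i : ℕ) < j + 1 := i.isLt
        omega
      · intro h
        exact absurd h (by simp)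
  have hval0 : ∀ (y : ℕ → Bool), (¬ ∃ i : ℕ, y i = true) → ∀ j, tauor X j y = false := by
    intro y hy j
    cases h : tauor X j y with
    | false => rfl
    | true =>
      obtain ⟨i, hvi, -, -⟩ := (tauor_iff X j y).1 h
      exact absurd ⟨(i : ℕ), hvi⟩ hy
  refine mem_congr hcomp fun y => ?_
  show f (fun j => tauor X j y) = bigOr y
  by_cases hy : ∃ i : ℕ, y i = true
  · have : (fun j => tauor X j y) = X (Nat.find hy) := funext (hval y hy)
    rw [this, hX2]
    exact (decide_eq_true hy).symm
  · have : (fun j => tauor X j y) = (fun _ => false) := funext (hval0 y hy)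
    rw [this, presBot_mem hF hfr hfF]
    exact (decide_eq_false hy).symm

lemma derive_wF {f : (ℕ → Bool) → Bool} (hfF : (⟨none, f⟩ : BFun) ∈ F)
    (hnc : ¬ Continuous f) : (⟨none, wF⟩ : BFun) ∈ F := by
  have hPB : f (fun _ => false) = false := presBot_mem hF hfr hfF
  have hbp : ∃ (b : Bool) (p : ℕ → Bool), f p = b ∧ p ∈ closure {x | f x = !b} := by
    have hno : ¬ IsOpen {x | f x = true} ∨ ¬ IsOpen {x | f x = false} := by
      by_contra hno
      push_neg at hno
      apply hnc
      rw [continuous_def]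
      intro s hs
      by_cases h1 : true ∈ s <;> by_cases h2 : false ∈ s
      · have : f ⁻¹' s = Set.univ := by ext x; cases hx : f x <;> simp [hx, h1, h2]
        rw [this]; exact isOpen_univ
      · have : f ⁻¹' s = {x | f x = true} := by ext x; cases hx : f x <;> simp [hx, h1, h2]
        rw [this]; exact hno.1
      · have : f ⁻¹' s = {x | f x = false} := by ext x; cases hx : f x <;> simp [hx, h1, h2]
        rw [this]; exact hno.2
      · have : f ⁻¹' s = ∅ := by ext x; cases hx : f x <;> simp [hx, h1, h2]
        rw [this]; exact isOpen_empty
    rcases hno with hno | hno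
    · obtain ⟨p, hp1, hp2⟩ := exists_closure_of_not_isOpen hno
      refine ⟨true, p, hp1, ?_⟩
      have : {x : ℕ → Bool | f x = true}ᶜ = {x | f x = !true} := by
        ext x; cases hx : f x <;> simp [hx]
      rw [← this]
      exact hp2
    · obtain ⟨p, hp1, hp2⟩ := exists_closure_of_not_isOpen hno
      refine ⟨false, p, hp1, ?_⟩
      have : {x : ℕ → Bool | f x = false}ᶜ = {x | f x = !false} := by
        ext x; cases hx : f x <;> simp [hx]
      rw [← this]
      exact hp2
  obtain ⟨b, p, hpb, hpcl⟩ := hbp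
  have hseq : ∀ n : ℕ, ∃ x : ℕ → Bool, (∀ j < n, x j = p j) ∧ f x = !b := by
    intro n
    obtain ⟨x, hxo, hxA⟩ := mem_closure_iff.1 hpcl
      {x : ℕ → Bool | ∀ j ∈ Finset.range n, x j = p j}
      (isOpen_eqOn _ _) (fun j _ => rfl)
    exact ⟨x, fun j hj => hxo j (Finset.mem_range.2 hj), hxA⟩
  choose X hX1 hX2 using hseq
  have hτmem : ∀ j : ℕ, (⟨none, tauw p X j⟩ : BFun) ∈ F := by
    intro j
    have hG : (⟨some (pn (j + 1)), Gw p X j⟩ : BFun) ∈ F :=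
      mem_fin hF hfr _ (Gw_presBot p X j)
    exact hF.comp (some (pn (j + 1))) none (Gw p X j) (fun k => fun v => v (k : ℕ)) hG
      (fun k => hF.proj none (k : ℕ))
  have hcomp := hF.comp none none f (fun j => tauw p X j) hfF hτmem
  -- semantics
  have hsem0 : ∀ v : ℕ → Bool, v 0 = false → ∀ j, tauw p X j v = false := by
    intro v h0 j
    cases h : tauw p X j v with
    | false => rfl
    | true =>
      have := ((tauw_iff p X j v).1 h).1
      rw [h0] at this
      exact absurd this (by simp)
  have hsemAll : ∀ v : ℕ → Bool, v 0 = true → (∀ i : ℕ, v (i + 1) = false) →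
      ∀ j, tauw p X j v = p j := by
    intro v h0 hall j
    apply bool_eq_of_iff
    rw [tauw_iff]
    constructor
    · rintro ⟨-, (⟨i, hvi, -, -⟩ | ⟨-, hpj⟩)⟩
      · rw [hall (i : ℕ)] at hvi
        exact absurd hvi (by simp)
      · exact hpj
    · intro hpj
      exact ⟨h0, Or.inr ⟨fun i => hall _, hpj⟩⟩
  have hsemEx : ∀ (v : ℕ → Bool), v 0 = true → ∀ (hy : ∃ i : ℕ, v (i + 1) = true),
      ∀ j, tauw p X j v = X (Nat.find hy) j := by
    intro v h0 hy j
    have hspec : v (Nat.find hy + 1) = true := Nat.find_spec hy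
    apply bool_eq_of_iff
    rw [tauw_iff]
    by_cases hij : Nat.find hy ≤ j
    · constructor
      · rintro ⟨-, (⟨i, hvi, hmin, hXi⟩ | ⟨hall, hpj⟩)⟩
        · have hle : Nat.find hy ≤ (i : ℕ) := Nat.find_min' hy hvi
          rcases Nat.lt_or_ge (Nat.find hy) (i : ℕ) with hlt | hge
          · exfalso
            have hk := hmin ⟨Nat.find hy, by omega⟩ (by simpa using hlt)
            rw [hspec] at hk
            exact absurd hk (by simp)
          · have hii : (i : ℕ) = Nat.find hy := by omega
            rw [← hii]
            exact hXi
        · exfalso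
          have := hall ⟨Nat.find hy, by omega⟩
          rw [hspec] at this
          exact absurd this (by simp)
      · intro hX
        refine ⟨h0, Or.inl ⟨⟨Nat.find hy, by omega⟩, hspec, ?_, hX⟩⟩
        intro k hk
        exact Bool.of_not_eq_true (Nat.find_min hy hk)
    · rw [hX1 (Nat.find hy) j (by omega)]
      constructor
      · rintro ⟨-, (⟨i, hvi, -, -⟩ | ⟨-, hpj⟩)⟩
        · exfalso
          have hle : Nat.find hy ≤ (i : ℕ) := Nat.find_min' hy hvi
          have : (i : ℕ) < j + 1 := i.isLt
          omega
        · exact hpj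
      · intro hpj
        refine ⟨h0, Or.inr ⟨fun i => ?_, hpj⟩⟩
        have hilt : (i : ℕ) < Nat.find hy := by
          have : (i : ℕ) < j + 1 := i.isLt
          omega
        exact Bool.of_not_eq_true (Nat.find_min hy hilt)
  -- assemble according to b
  cases b with
  | false =>
    refine mem_congr hcomp fun v => ?_
    show f (fun j => tauw p X j v) = wF v
    cases h0 : v 0 with
    | false =>
      have : (fun j => tauw p X j v) = (fun _ => false) := funext (hsem0 v h0)
      rw [this, hPB, wF_eq, h0, Bool.false_and]
    | true =>
      by_cases hy : ∃ i : ℕ, v (i + 1) = true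
      · have : (fun j => tauw p X j v) = X (Nat.find hy) := funext (hsemEx v h0 hy)
        rw [this, hX2, wF_eq, h0, decide_eq_true hy]
        rfl
      · have : (fun j => tauw p X j v) = p :=
          funext (hsemAll v h0 (fun i => Bool.of_not_eq_true fun hc => hy ⟨i, hc⟩))
        rw [this, hpb, wF_eq, h0, decide_eq_false hy]
        rfl
  | true =>
    have c3 : (⟨some (pn 1), fun u : Fin 2 → Bool => u 0 && !u 1⟩ : BFun) ∈ F :=
      mem_fin hF hfr _ rfl
    have hcomp2 := hF.comp (some (pn 1)) none (fun u : Fin 2 → Bool => u 0 && !u 1)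
      (fun k => if (k : ℕ) = 0 then (fun v : ℕ → Bool => v 0)
        else (fun v => f (fun j => tauw p X j v))) c3
      (fun k => by
        by_cases hk : (k : ℕ) = 0
        · show (⟨none, if (k : ℕ) = 0 then (fun v : ℕ → Bool => v 0)
            else (fun v => f (fun j => tauw p X j v))⟩ : BFun) ∈ F
          rw [if_pos hk]
          exact hF.proj none 0
        · show (⟨none, if (k : ℕ) = 0 then (fun v : ℕ → Bool => v 0)
            else (fun v => f (fun j => tauw p X j v))⟩ : BFun) ∈ F
          rw [if_neg hk]
          exact hcomp)
    refine mem_congr hcomp2 fun v => ?_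
    show (v 0 && !(f (fun j => tauw p X j v))) = wF v
    cases h0 : v 0 with
    | false => rw [wF_eq, h0, Bool.false_and, Bool.false_and]
    | true =>
      by_cases hy : ∃ i : ℕ, v (i + 1) = true
      · have : (fun j => tauw p X j v) = X (Nat.find hy) := funext (hsemEx v h0 hy)
        rw [this, hX2, wF_eq, h0, decide_eq_true hy]
        rfl
      · have : (fun j => tauw p X j v) = p :=
          funext (hsemAll v h0 (fun i => Bool.of_not_eq_true fun hc => hy ⟨i, hc⟩))
        rw [this, hpb, wF_eq, h0, decide_eq_false hy]
        rfl

end Derive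

end BCproof


/-- There are exactly three Borel clones whose finitary restriction is the set of all
finitary `f` with `f(0⃗) = 0`: (i) all Borel `f` with `f(0⃗) = 0`; (ii) all Borel `f`
vanishing on a neighborhood of `0⃗`; (iii) all continuous `f` with `f(0⃗) = 0`. -/
theorem borel_clones_over_T0 :
    (IsClone {f | IsBorelFun f ∧ PresBot f} ∧
      finRes {f | IsBorelFun f ∧ PresBot f} = {f | finitary f ∧ PresBot f}) ∧
    (IsClone {f | IsBorelFun f ∧ VanishNearBot f} ∧
      finRes {f | IsBorelFun f ∧ VanishNearBot f} = {f | finitary f ∧ PresBot f}) ∧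
    (IsClone {f | IsContFun f ∧ PresBot f} ∧
      {f | IsContFun f ∧ PresBot f} ⊆ BorelClass ∧
      finRes {f | IsContFun f ∧ PresBot f} = {f | finitary f ∧ PresBot f}) ∧
    ({f | IsBorelFun f ∧ PresBot f} ≠ {f | IsBorelFun f ∧ VanishNearBot f} ∧
     {f | IsBorelFun f ∧ PresBot f} ≠ {f | IsContFun f ∧ PresBot f} ∧
     {f | IsBorelFun f ∧ VanishNearBot f} ≠ {f | IsContFun f ∧ PresBot f}) ∧
    (∀ F : Set BFun, IsClone F → F ⊆ BorelClass →
      finRes F = {f | finitary f ∧ PresBot f} →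
      F = {f | IsBorelFun f ∧ PresBot f} ∨
      F = {f | IsBorelFun f ∧ VanishNearBot f} ∨
      F = {f | IsContFun f ∧ PresBot f}) := by
  classical
  refine ⟨⟨BCproof.cloneB, BCproof.frB⟩, ⟨BCproof.cloneV, BCproof.frV⟩,
    ⟨BCproof.cloneC, BCproof.csubB, BCproof.frC⟩, ⟨?_, ?_, ?_⟩, ?_⟩
  · intro h
    exact BCproof.bigOr_not_vanish (h ▸ BCproof.bigOr_mem_B).2
  · intro h
    exact BCproof.bigOr_not_vanish (BCproof.csubV (h ▸ BCproof.bigOr_mem_B)).2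
  · intro h
    exact BCproof.bigAnd_not_cont (h ▸ BCproof.bigAnd_mem_V).1
  · intro F hF hFB hfr
    by_cases h1 : ∃ g : BFun, g ∈ F ∧ ¬ VanishNearBot g
    · left
      obtain ⟨⟨a, g⟩, hgF, hgV⟩ := h1
      cases a with
      | some n =>
        exact absurd (BCproof.cont_presBot_vanish
          (BCproof.finitary_cont (by simp) g)
          (BCproof.presBot_mem hF hfr hgF)) hgV
      | none =>
        have hcl : (fun _ => false) ∈ closure {x : ℕ → Bool | g x = true} := not_not.1 hgV
        have hOr := BCproof.derive_bigOr hF hfr hgF hcl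
        have hw : (⟨none, BCproof.wF⟩ : BFun) ∈ F := by
          have c2 : (⟨some (BCproof.pn 1), fun u : Fin 2 → Bool => u 0 && u 1⟩ : BFun) ∈ F :=
            BCproof.mem_fin hF hfr _ rfl
          have hcomp := hF.comp (some (BCproof.pn 1)) none
            (fun u : Fin 2 → Bool => u 0 && u 1)
            (fun k => if (k : ℕ) = 0 then (fun v : ℕ → Bool => v 0)
              else (fun v : ℕ → Bool => bigOr (fun n => v (n + 1)))) c2
            (fun k => by
              by_cases hk : (k : ℕ) = 0
              · show (⟨none, if (k : ℕ) = 0 then (fun v : ℕ → Bool => v 0)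
                  else (fun v : ℕ → Bool => bigOr (fun n => v (n + 1)))⟩ : BFun) ∈ F
                rw [if_pos hk]
                exact hF.proj none 0
              · show (⟨none, if (k : ℕ) = 0 then (fun v : ℕ → Bool => v 0)
                  else (fun v : ℕ → Bool => bigOr (fun n => v (n + 1)))⟩ : BFun) ∈ F
                rw [if_neg hk]
                exact hF.comp none none bigOr (fun n => fun v => v (n + 1)) hOr
                  (fun n => hF.proj none (n + 1)))
          refine BCproof.mem_congr hcomp fun v => ?_
          rfl
        ext ⟨c, f⟩
        constructor
        · intro hf
          exact ⟨hFB hf, BCproof.presBot_mem hF hfr hf⟩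
        · rintro ⟨hB, hp⟩
          cases c with
          | some n =>
            have : (⟨some n, f⟩ : BFun) ∈ finRes F := by
              rw [hfr]; exact ⟨by simp [finitary], hp⟩
            exact this.1
          | none =>
            have hUA := BCproof.UA_mem hF hfr hw {x : ℕ → Bool | f x = true} hB
            have hcomp := hF.comp none none (BCproof.UA {x : ℕ → Bool | f x = true})
              (fun k => Nat.rec (motive := fun _ => (ℕ → Bool) → Bool) bigOr
                (fun n _ => fun v => v n) k) hUA
              (fun k => by
                cases k with
                | zero => exact hOr
                | succ n => exact hF.proj none n)
            refine BCproof.mem_congr hcomp fun v => ?_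
            show BCproof.UA {x : ℕ → Bool | f x = true}
              (fun k => Nat.rec (motive := fun _ => (ℕ → Bool) → Bool) bigOr
                (fun n _ => fun u => u n) k v) = f v
            apply BCproof.bool_eq_of_iff
            rw [BCproof.UA_eq_true_iff]
            constructor
            · rintro ⟨-, hm⟩
              exact hm
            · intro hfv
              refine ⟨?_, hfv⟩
              apply decide_eq_true
              by_contra hno
              have hv0 : v = (fun _ => false) :=
                funext fun i => Bool.of_not_eq_true fun hc => hno ⟨i, hc⟩
              rw [hv0] at hfv
              rw [show f (fun _ => false) = false from hp] at hfv
              exact absurd hfv (by simp)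
    · by_cases h2 : ∃ g : BFun, g ∈ F ∧ ¬ IsContFun g
      · right; left
        obtain ⟨⟨a, g⟩, hgF, hgC⟩ := h2
        cases a with
        | some n => exact absurd (BCproof.finitary_cont (by simp) g) hgC
        | none =>
          have hw := BCproof.derive_wF hF hfr hgF hgC
          push_neg at h1
          ext ⟨c, f⟩
          constructor
          · intro hf
            exact ⟨hFB hf, h1 _ hf⟩
          · rintro ⟨hB, hv⟩
            cases c with
            | some n =>
              have : (⟨some n, f⟩ : BFun) ∈ finRes F := by
                rw [hfr]; exact ⟨by simp [finitary], BCproof.presBot_of_vanish hv⟩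
              exact this.1
            | none =>
              obtain ⟨T, hT⟩ := BCproof.vanish_iff.1 hv
              set N := T.sup id with hN
              have horN : (⟨none, fun v : ℕ → Bool =>
                  decide (∃ i : Fin (N + 1), v (i : ℕ) = true)⟩ : BFun) ∈ F := by
                have hGN : (⟨some (BCproof.pn N),
                    fun u : Fin (N + 1) → Bool => decide (∃ i, u i = true)⟩ : BFun) ∈ F :=
                  BCproof.mem_fin hF hfr _
                    (decide_eq_false (by rintro ⟨i, hi⟩; exact Bool.false_ne_true hi))
                exact hF.comp (some (BCproof.pn N)) none _
                  (fun k => fun v : ℕ → Bool => v (k : ℕ)) hGN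
                  (fun k => hF.proj none (k : ℕ))
              have hUA := BCproof.UA_mem hF hfr hw {x : ℕ → Bool | f x = true} hB
              have hcomp := hF.comp none none (BCproof.UA {x : ℕ → Bool | f x = true})
                (fun k => Nat.rec (motive := fun _ => (ℕ → Bool) → Bool)
                  (fun v : ℕ → Bool => decide (∃ i : Fin (N + 1), v (i : ℕ) = true))
                  (fun n _ => fun v => v n) k) hUA
                (fun k => by
                  cases k with
                  | zero => exact horN
                  | succ n => exact hF.proj none n)
              refine BCproof.mem_congr hcomp fun v => ?_
              show BCproof.UA {x : ℕ → Bool | f x = true}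
                (fun k => Nat.rec (motive := fun _ => (ℕ → Bool) → Bool)
                  (fun u : ℕ → Bool => decide (∃ i : Fin (N + 1), u (i : ℕ) = true))
                  (fun n _ => fun u => u n) k v) = f v
              apply BCproof.bool_eq_of_iff
              rw [BCproof.UA_eq_true_iff]
              constructor
              · rintro ⟨-, hm⟩
                exact hm
              · intro hfv
                refine ⟨?_, hfv⟩
                apply decide_eq_true
                by_contra hno
                have hvT : ∀ j ∈ T, v j = false := by
                  intro j hj
                  have hjN : j < N + 1 := Nat.lt_succ_of_le (Finset.le_sup (f := id) hj)
                  exact Bool.of_not_eq_true fun hc => hno ⟨⟨j, hjN⟩, hc⟩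
                rw [hT v hvT] at hfv
                exact absurd hfv (by simp)
      · right; right
        push_neg at h2
        ext ⟨a, f⟩
        constructor
        · intro hf
          exact ⟨h2 _ hf, BCproof.presBot_mem hF hfr hf⟩
        · rintro ⟨hc, hp⟩
          exact BCproof.cont_mem hF hfr hc hp
end

section
/- There are exactly five Borel clones whose finitary restriction is the set of all finitary Boolean functions f with f(0⃗) = 0 and f(1⃗) = 1, namely the sets of all Borel f (arities 1 ≤ n ≤ ω) satisfying respectively: (i) f(0⃗) = 0 and f(1⃗) = 1; (ii) f(0⃗) = 0 and f equals 1 on a neighborhood of 1⃗; (iii) f vanishes on a neighborhood of 0⃗ and f(1⃗) = 1; (iv) f vanishes on a neighborhood of 0⃗ and f equals 1 on a neighborhood of 1⃗; (v) f is continuous with f(0⃗) = 0 and f(1⃗) = 1. -/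
open scoped Classical

def C01 : Set BFun := {f | IsBorelFun f ∧ PresBot f ∧ PresTop f}
def C02 : Set BFun := {f | IsBorelFun f ∧ PresBot f ∧ OneNearTop f}
def C03 : Set BFun := {f | IsBorelFun f ∧ VanishNearBot f ∧ PresTop f}
def C04 : Set BFun := {f | IsBorelFun f ∧ VanishNearBot f ∧ OneNearTop f}
def C05 : Set BFun := {f | IsContFun f ∧ PresBot f ∧ PresTop f}

section PartA
variable {ι : Type}

lemma notMem_closure_iff (A : Set (ι → Bool)) (p : ι → Bool) :
    p ∉ closure A ↔ ∃ I : Finset ι, ∀ x, (∀ i ∈ I, x i = p i) → x ∉ A := by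
  constructor
  · intro h
    rw [mem_closure_iff] at h
    push_neg at h
    obtain ⟨U, hUo, hpU, hdisj⟩ := h
    obtain ⟨I, u, hu, hsub⟩ := isOpen_pi_iff.mp hUo p hpU
    refine ⟨I, fun x hx hxA => ?_⟩
    have hxU : x ∈ U := hsub (fun i hi => by
      have := (hu i hi).2
      simpa [hx i hi] using this)
    have : x ∈ U ∩ A := ⟨hxU, hxA⟩
    rw [hdisj] at this
    exact this
  · rintro ⟨I, hI⟩ hcl
    rw [mem_closure_iff] at hcl
    have hUo : IsOpen {x : ι → Bool | ∀ i ∈ I, x i = p i} := by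
      have : {x : ι → Bool | ∀ i ∈ I, x i = p i} = Set.pi ↑I (fun i => {p i}) := by
        ext x; simp [Set.mem_pi]
      rw [this]
      exact isOpen_set_pi I.finite_toSet (fun a _ => isOpen_discrete _)
    obtain ⟨x, hxU, hxA⟩ := hcl _ hUo (fun i _ => rfl)
    exact hI x hxU hxA

lemma mem_closure_iff'' (A : Set (ι → Bool)) (p : ι → Bool) :
    p ∈ closure A ↔ ∀ I : Finset ι, ∃ x, (∀ i ∈ I, x i = p i) ∧ x ∈ A := by
  constructor
  · intro h I
    by_contra hc
    push_neg at hc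
    exact (notMem_closure_iff A p).mpr ⟨I, hc⟩ h
  · intro h
    by_contra hc
    obtain ⟨I, hI⟩ := (notMem_closure_iff A p).mp hc
    obtain ⟨x, hx, hxA⟩ := h I
    exact hI x hx hxA

lemma notMem_closure_iff_nat (A : Set (ℕ → Bool)) (p : ℕ → Bool) :
    p ∉ closure A ↔ ∃ N, ∀ x, (∀ i < N, x i = p i) → x ∉ A := by
  rw [notMem_closure_iff]
  constructor
  · rintro ⟨I, hI⟩
    refine ⟨(I.sup id) + 1, fun x hx => hI x (fun i hi => hx i ?_)⟩
    exact Nat.lt_succ_of_le (Finset.le_sup (f := id) hi)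
  · rintro ⟨N, hN⟩
    exact ⟨Finset.range N, fun x hx => hN x (fun i hi => hx i (Finset.mem_range.mpr hi))⟩

lemma mem_closure_iff_nat (A : Set (ℕ → Bool)) (p : ℕ → Bool) :
    p ∈ closure A ↔ ∀ N, ∃ x, (∀ i < N, x i = p i) ∧ x ∈ A := by
  constructor
  · intro h N
    by_contra hc
    push_neg at hc
    exact (notMem_closure_iff_nat A p).mpr ⟨N, hc⟩ h
  · intro h
    by_contra hc
    obtain ⟨N, hN⟩ := (notMem_closure_iff_nat A p).mp hc
    obtain ⟨x, hx, hxA⟩ := h N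
    exact hN x hx hxA

lemma measurable_of_set {X : Type*} [MeasurableSpace X] (f : X → Bool)
    (h : MeasurableSet {x | f x = true}) : Measurable f := by
  intro s _
  have hs : f ⁻¹' s =
      ((if true ∈ s then {x | f x = true} else ∅) ∪
       (if false ∈ s then {x | f x = true}ᶜ else ∅)) := by
    ext x
    cases hx : f x <;> by_cases ht : true ∈ s <;> by_cases hf : false ∈ s <;>
      simp [Set.mem_preimage, hx, ht, hf]
  rw [hs]
  apply MeasurableSet.union <;> split_ifs <;>
    simp [h, h.compl, MeasurableSet.empty]

lemma continuous_iff_findep (f : (ℕ → Bool) → Bool) :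
    Continuous f ↔ ∃ N, ∀ z z', (∀ i < N, z i = z' i) → f z = f z' := by
  constructor
  · intro hf
    have key : ∀ z : ℕ → Bool, ∃ I : Finset ℕ,
        ∀ x, (∀ i ∈ I, x i = z i) → f x = f z := by
      intro z
      have hop : IsOpen (f ⁻¹' {f z}) := (isOpen_discrete _).preimage hf
      obtain ⟨I, u, hu, hsub⟩ := isOpen_pi_iff.mp hop z rfl
      refine ⟨I, fun x hx => ?_⟩
      have : x ∈ f ⁻¹' {f z} := hsub (fun i hi => by
        have := (hu i hi).2; simpa [hx i hi] using this)
      simpa using this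
    choose I hI using key
    have hcov : Set.univ ⊆ ⋃ z, {x : ℕ → Bool | ∀ i ∈ I z, x i = z i} := by
      intro x _
      exact Set.mem_iUnion.mpr ⟨x, fun i _ => rfl⟩
    have hopen : ∀ z, IsOpen {x : ℕ → Bool | ∀ i ∈ I z, x i = z i} := by
      intro z
      have : {x : ℕ → Bool | ∀ i ∈ I z, x i = z i} = Set.pi ↑(I z) (fun i => {z i}) := by
        ext x; simp [Set.mem_pi]
      rw [this]
      exact isOpen_set_pi (I z).finite_toSet (fun a _ => isOpen_discrete _)
    obtain ⟨t, ht⟩ := isCompact_univ.elim_finite_subcover _ hopen hcov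
    refine ⟨(t.sup fun z => (I z).sup id) + 1, fun z z' hzz => ?_⟩
    obtain ⟨w, hwt, hzw⟩ : ∃ w ∈ t, ∀ i ∈ I w, z i = w i := by
      have := ht (Set.mem_univ z)
      simpa using this
    have hz'w : ∀ i ∈ I w, z' i = w i := by
      intro i hi
      have hilt : i < (t.sup fun z => (I z).sup id) + 1 :=
        Nat.lt_succ_of_le (le_trans (Finset.le_sup (f := id) hi)
          (Finset.le_sup (f := fun z => (I z).sup id) hwt))
      rw [← hzz i hilt]
      exact hzw i hi
    rw [hI w z hzw, hI w z' hz'w]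
  · rintro ⟨N, hN⟩
    have hfe : f = (fun v : Fin N → Bool =>
        f (fun i => if h : i < N then v ⟨i, h⟩ else false)) ∘ (fun z (i : Fin N) => z i) := by
      funext z
      exact hN _ _ (fun i hi => by simp [hi])
    rw [hfe]
    exact continuous_of_discreteTopology.comp (continuous_pi fun i => continuous_apply _)

lemma findep_continuous {n : ℕ} (f : (Fin n → Bool) → Bool) : Continuous f :=
  continuous_of_discreteTopology

end PartA

section PartB

/-- guarded countable or: `a ∧ ⋁ y`. -/
noncomputable def gOr : (ℕ → Bool) → Bool := fun w => w 0 && decide (∃ m, w (m+1) = true)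

/-- guarded countable and: `a ∨ ⋀ y`. -/
noncomputable def gAnd : (ℕ → Bool) → Bool := fun w => w 0 || decide (∀ m, w (m+1) = true)

/-- conditional: `if a then ⋁ y else ⋀ y`. -/
noncomputable def gIf : (ℕ → Bool) → Bool := fun w =>
  bif w 0 then decide (∃ m, w (m+1) = true) else decide (∀ m, w (m+1) = true)

/-- conditional membership gadget: `if x ∈ B then a else b`. -/
noncomputable def Tfun (B : Set (ℕ → Bool)) : (ℕ → Bool) → Bool := fun w =>
  if (fun i => w (i+2)) ∈ B then w 0 else w 1

end PartB

section PartC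

variable (F : Set BFun)

lemma fin_mem (hfin : finRes F = {f | finitary f ∧ PresBot f ∧ PresTop f}) (n : ℕ+) (g : (Fin (n : ℕ) → Bool) → Bool)
    (h0 : g (fun _ => false) = false) (h1 : g (fun _ => true) = true) :
    (⟨some n, g⟩ : BFun) ∈ F := by
  have : (⟨some n, g⟩ : BFun) ∈ finRes F := by
    rw [hfin]
    exact ⟨by simp [finitary], h0, h1⟩
  exact this.1

lemma mem_findep (hF : IsClone F) (hfin : finRes F = {f | finitary f ∧ PresBot f ∧ PresTop f}) (f : (ℕ → Bool) → Bool) (N : ℕ)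
    (hdep : ∀ z z', (∀ i < N + 1, z i = z' i) → f z = f z')
    (hbot : f (fun _ => false) = false) (htop : f (fun _ => true) = true) :
    (⟨none, f⟩ : BFun) ∈ F := by
  set g : (Fin (N + 1) → Bool) → Bool :=
    fun v => f (fun i => if h : i < N + 1 then v ⟨i, h⟩ else false) with hg
  have hgbot : g (fun _ => false) = false := by
    rw [hg]
    exact (hdep _ _ (fun i hi => by simp [hi])).trans hbot
  have hgtop : g (fun _ => true) = true := by
    rw [hg]
    exact (hdep _ _ (fun i hi => by simp [hi])).trans htop
  have hgF : (⟨some ⟨N + 1, N.succ_pos⟩, g⟩ : BFun) ∈ F :=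
    fin_mem F hfin ⟨N + 1, N.succ_pos⟩ g hgbot hgtop
  have hcomp := hF.comp (some ⟨N + 1, N.succ_pos⟩) none g
    (fun i x => x i.val) hgF (fun i => hF.proj none i.val)
  have hfe : f = fun x => g (fun i => x i.val) := by
    funext x
    rw [hg]
    apply hdep
    intro i hi
    simp [hi]
  rw [hfe]
  exact hcomp

/-- composition of ω-ary members -/
lemma comp_omega (hF : IsClone F) (g : (ℕ → Bool) → Bool) (t : ℕ → (ℕ → Bool) → Bool)
    (hg : (⟨none, g⟩ : BFun) ∈ F) (ht : ∀ m, (⟨none, t m⟩ : BFun) ∈ F) :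
    (⟨none, fun w => g (fun m => t m w)⟩ : BFun) ∈ F :=
  hF.comp none none g t hg ht

/-- binary op composition: `fun w => op (s w) (t w)` -/
lemma comp_two (hF : IsClone F) (hfin : finRes F = {f | finitary f ∧ PresBot f ∧ PresTop f}) (op : Bool → Bool → Bool) (hop0 : op false false = false)
    (hop1 : op true true = true)
    (s t : (ℕ → Bool) → Bool)
    (hs : (⟨none, s⟩ : BFun) ∈ F) (ht : (⟨none, t⟩ : BFun) ∈ F) :
    (⟨none, fun w => op (s w) (t w)⟩ : BFun) ∈ F := by
  have h2 : (⟨some 2, fun v : Fin 2 → Bool => op (v 0) (v 1)⟩ : BFun) ∈ F :=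
    fin_mem F hfin 2 _ hop0 hop1
  have := hF.comp (some 2) none (fun v : Fin 2 → Bool => op (v 0) (v 1))
    (fun j : Fin 2 => if j = (0 : Fin 2) then s else t) h2 (fun j : Fin 2 => by
      by_cases hj : j = (0 : Fin 2)
      · rw [if_pos hj]; exact hs
      · rw [if_neg hj]; exact ht)
  simpa using this

/-- ternary if-then-else composition -/
lemma comp_ite (hF : IsClone F) (hfin : finRes F = {f | finitary f ∧ PresBot f ∧ PresTop f}) (c s t : (ℕ → Bool) → Bool)
    (hc : (⟨none, c⟩ : BFun) ∈ F) (hs : (⟨none, s⟩ : BFun) ∈ F)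
    (ht : (⟨none, t⟩ : BFun) ∈ F) :
    (⟨none, fun w => bif c w then s w else t w⟩ : BFun) ∈ F := by
  have h3 : (⟨some 3, fun v : Fin 3 → Bool => bif v 0 then v 1 else v 2⟩ : BFun) ∈ F :=
    fin_mem F hfin 3 _ rfl rfl
  have := hF.comp (some 3) none (fun v : Fin 3 → Bool => bif v 0 then v 1 else v 2)
    (fun j : Fin 3 => if j = (0 : Fin 3) then c else if j = (1 : Fin 3) then s else t) h3 (fun j : Fin 3 => by
      by_cases hj0 : j = (0 : Fin 3)
      · rw [if_pos hj0]; exact hc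
      · by_cases hj1 : j = (1 : Fin 3)
        · rw [if_neg hj0, if_pos hj1]; exact hs
        · rw [if_neg hj0, if_neg hj1]; exact ht)
  simpa using this

lemma bigOr_mem (hF : IsClone F) (hfin : finRes F = {f | finitary f ∧ PresBot f ∧ PresTop f})
    (f : (ℕ → Bool) → Bool) (hfF : (⟨none, f⟩ : BFun) ∈ F)
    (hbot : f (fun _ => false) = false)
    (hcl : (fun _ => false) ∈ closure {x | f x = true}) :
    (⟨none, bigOr⟩ : BFun) ∈ F := by
  have hYe : ∀ n, ∃ x, f x = true ∧ ∀ i < n, x i = false := by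
    intro n
    obtain ⟨x, hx1, hx2⟩ := (mem_closure_iff_nat _ _).mp hcl n
    exact ⟨x, hx2, hx1⟩
  choose Y hY1 hY2 using hYe
  set g : ℕ → (ℕ → Bool) → Bool := fun i x =>
    (decide (∀ j, j ≤ i → x j = true)) ||
      (if h : ∃ k, 1 ≤ k ∧ k ≤ i ∧ x k = true then Y (Nat.find h) i else false) with hgdef
  have hgF : ∀ i, (⟨none, g i⟩ : BFun) ∈ F := by
    intro i
    apply mem_findep F hF hfin _ i
    · intro z z' hzz
      have hze : ∀ j ≤ i, z j = z' j := fun j hj => hzz j (Nat.lt_succ_of_le hj)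
      have e1 : (∀ j, j ≤ i → z j = true) = (∀ j, j ≤ i → z' j = true) := by
        apply propext; constructor <;> intro h j hj
        · rw [← hze j hj]; exact h j hj
        · rw [hze j hj]; exact h j hj
      simp only [hgdef, e1]
      congr 1
      by_cases hP : ∃ k, 1 ≤ k ∧ k ≤ i ∧ z k = true
      · obtain ⟨k, hk1, hk2, hk3⟩ := hP
        have hP : ∃ k, 1 ≤ k ∧ k ≤ i ∧ z k = true := ⟨k, hk1, hk2, hk3⟩
        have hQ : ∃ k, 1 ≤ k ∧ k ≤ i ∧ z' k = true := ⟨k, hk1, hk2, by rw [← hze k hk2]; exact hk3⟩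
        rw [dif_pos hP, dif_pos hQ]
        have hfind : Nat.find hP = Nat.find hQ := by
          apply le_antisymm
          · have hs := Nat.find_spec hQ
            exact Nat.find_min' hP ⟨hs.1, hs.2.1, by rw [hze _ hs.2.1]; exact hs.2.2⟩
          · have hs := Nat.find_spec hP
            exact Nat.find_min' hQ ⟨hs.1, hs.2.1, by rw [← hze _ hs.2.1]; exact hs.2.2⟩
        rw [hfind]
      · have hQ : ¬ ∃ k, 1 ≤ k ∧ k ≤ i ∧ z' k = true := by
          rintro ⟨k, hk1, hk2, hk3⟩
          exact hP ⟨k, hk1, hk2, by rw [hze k hk2]; exact hk3⟩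
        rw [dif_neg hP, dif_neg hQ]
    · simp [hgdef]
      exact ⟨0, Nat.zero_le i⟩
    · simp [hgdef]
  have hinner : (⟨none, fun x => f (fun i => g i x)⟩ : BFun) ∈ F :=
    comp_omega F hF f g hfF hgF
  have hmem : (⟨none, fun x => x 0 || f (fun i => g i x)⟩ : BFun) ∈ F :=
    comp_two F hF hfin (· || ·) rfl rfl _ _ (hF.proj none 0) hinner
  have hval : bigOr = fun x => x 0 || f (fun i => g i x) := by
    funext x
    by_cases hex : ∃ k, x k = true
    · by_cases hx0 : x 0 = true
      · simp [bigOr, hex, hx0]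
      · have hx0' : x 0 = false := by simpa using hx0
        have hn : ∃ k, 1 ≤ k ∧ x k = true := by
          obtain ⟨k, hk⟩ := hex
          refine ⟨k, ?_, hk⟩
          rcases Nat.eq_zero_or_pos k with h | h
          · rw [h] at hk; rw [hk] at hx0'; exact absurd hx0' (by simp)
          · exact h
        set n := Nat.find hn with hndef
        have hspec := Nat.find_spec hn
        have hgY : (fun i => g i x) = Y n := by
          funext i
          have hd1 : ¬ (∀ j, j ≤ i → x j = true) := fun h => by
            rw [h 0 (Nat.zero_le i)] at hx0'; exact absurd hx0' (by simp)
          by_cases hb : ∃ k, 1 ≤ k ∧ k ≤ i ∧ x k = true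
          · have hbs := Nat.find_spec hb
            have hni : n ≤ i := by
              obtain ⟨k, hk1, hk2, hk3⟩ := hb
              exact le_trans (Nat.find_min' hn ⟨hk1, hk3⟩) hk2
            have hfind : Nat.find hb = n := by
              apply le_antisymm
              · exact Nat.find_min' hb ⟨hspec.1, hni, hspec.2⟩
              · exact Nat.find_min' hn ⟨hbs.1, hbs.2.2⟩
            simp only [hgdef]
            rw [dif_pos hb, hfind]
            simp [hd1]
          · have hin : i < n := by
              by_contra hc
              push_neg at hc
              exact hb ⟨n, hspec.1, hc, hspec.2⟩
            simp only [hgdef]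
            rw [dif_neg hb]
            simp [hd1, hY2 n i hin]
        rw [hgY]
        simp [bigOr, hex, hx0', hY1 n]
    · push_neg at hex
      have hxb : x = (fun _ => false) := funext fun k => by simpa using hex k
      have hgb : (fun i => g i x) = (fun _ => false) := by
        funext i
        have hd1 : ¬ (∀ j, j ≤ i → x j = true) := fun h => by
          have := h 0 (Nat.zero_le i); rw [hxb] at this; exact absurd this (by simp)
        have hb : ¬ ∃ k, 1 ≤ k ∧ k ≤ i ∧ x k = true := by
          rintro ⟨k, _, _, hk3⟩
          exact (hex k) hk3
        simp only [hgdef]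
        rw [dif_neg hb]
        simp [hd1]
      have : x 0 = false := by rw [hxb]
      rw [hgb]
      simp [bigOr, hbot, this, hex]
  rw [hval]
  exact hmem

lemma bigAnd_mem (hF : IsClone F) (hfin : finRes F = {f | finitary f ∧ PresBot f ∧ PresTop f})
    (f : (ℕ → Bool) → Bool) (hfF : (⟨none, f⟩ : BFun) ∈ F)
    (htop : f (fun _ => true) = true)
    (hcl : (fun _ => true) ∈ closure {x | f x = false}) :
    (⟨none, bigAnd⟩ : BFun) ∈ F := by
  have hYe : ∀ n, ∃ x, f x = false ∧ ∀ i < n, x i = true := by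
    intro n
    obtain ⟨x, hx1, hx2⟩ := (mem_closure_iff_nat _ _).mp hcl n
    exact ⟨x, hx2, hx1⟩
  choose Y hY1 hY2 using hYe
  set g : ℕ → (ℕ → Bool) → Bool := fun i x =>
    (decide (∃ j, j ≤ i ∧ x j = true)) &&
      (if h : ∃ k, 1 ≤ k ∧ k ≤ i ∧ x k = false then Y (Nat.find h) i else true) with hgdef
  have hgF : ∀ i, (⟨none, g i⟩ : BFun) ∈ F := by
    intro i
    apply mem_findep F hF hfin _ i
    · intro z z' hzz
      have hze : ∀ j ≤ i, z j = z' j := fun j hj => hzz j (Nat.lt_succ_of_le hj)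
      have e1 : (∃ j, j ≤ i ∧ z j = true) = (∃ j, j ≤ i ∧ z' j = true) := by
        apply propext; constructor <;> rintro ⟨j, hj, hjv⟩
        · exact ⟨j, hj, by rw [← hze j hj]; exact hjv⟩
        · exact ⟨j, hj, by rw [hze j hj]; exact hjv⟩
      simp only [hgdef, e1]
      congr 1
      by_cases hP : ∃ k, 1 ≤ k ∧ k ≤ i ∧ z k = false
      · obtain ⟨k, hk1, hk2, hk3⟩ := hP
        have hP : ∃ k, 1 ≤ k ∧ k ≤ i ∧ z k = false := ⟨k, hk1, hk2, hk3⟩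
        have hQ : ∃ k, 1 ≤ k ∧ k ≤ i ∧ z' k = false := ⟨k, hk1, hk2, by rw [← hze k hk2]; exact hk3⟩
        rw [dif_pos hP, dif_pos hQ]
        have hfind : Nat.find hP = Nat.find hQ := by
          apply le_antisymm
          · have hs := Nat.find_spec hQ
            exact Nat.find_min' hP ⟨hs.1, hs.2.1, by rw [hze _ hs.2.1]; exact hs.2.2⟩
          · have hs := Nat.find_spec hP
            exact Nat.find_min' hQ ⟨hs.1, hs.2.1, by rw [← hze _ hs.2.1]; exact hs.2.2⟩
        rw [hfind]
      · have hQ : ¬ ∃ k, 1 ≤ k ∧ k ≤ i ∧ z' k = false := by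
          rintro ⟨k, hk1, hk2, hk3⟩
          exact hP ⟨k, hk1, hk2, by rw [hze k hk2]; exact hk3⟩
        rw [dif_neg hP, dif_neg hQ]
    · simp [hgdef]
    · simp [hgdef]
      exact ⟨0, Nat.zero_le i⟩
  have hinner : (⟨none, fun x => f (fun i => g i x)⟩ : BFun) ∈ F :=
    comp_omega F hF f g hfF hgF
  have hmem : (⟨none, fun x => x 0 && f (fun i => g i x)⟩ : BFun) ∈ F :=
    comp_two F hF hfin (· && ·) rfl rfl _ _ (hF.proj none 0) hinner
  have hval : bigAnd = fun x => x 0 && f (fun i => g i x) := by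
    funext x
    by_cases hex : ∃ k, x k = false
    · by_cases hx0 : x 0 = false
      · have hb : bigAnd x = false := by
          simp only [bigAnd]
          simp only [decide_eq_false_iff_not]
          intro h
          rw [h 0] at hx0
          exact absurd hx0 (by simp)
        rw [hb, hx0]
        simp
      · have hx0' : x 0 = true := by simpa using hx0
        have hn : ∃ k, 1 ≤ k ∧ x k = false := by
          obtain ⟨k, hk⟩ := hex
          refine ⟨k, ?_, hk⟩
          rcases Nat.eq_zero_or_pos k with h | h
          · rw [h] at hk; rw [hk] at hx0'; exact absurd hx0' (by simp)
          · exact h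
        set n := Nat.find hn with hndef
        have hspec := Nat.find_spec hn
        have hgY : (fun i => g i x) = Y n := by
          funext i
          have hd1 : ∃ j, j ≤ i ∧ x j = true := ⟨0, Nat.zero_le i, hx0'⟩
          by_cases hb : ∃ k, 1 ≤ k ∧ k ≤ i ∧ x k = false
          · have hbs := Nat.find_spec hb
            have hni : n ≤ i := by
              obtain ⟨k, hk1, hk2, hk3⟩ := hb
              exact le_trans (Nat.find_min' hn ⟨hk1, hk3⟩) hk2
            have hfind : Nat.find hb = n := by
              apply le_antisymm
              · exact Nat.find_min' hb ⟨hspec.1, hni, hspec.2⟩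
              · exact Nat.find_min' hn ⟨hbs.1, hbs.2.2⟩
            simp only [hgdef]
            rw [dif_pos hb, hfind]
            simp [hd1]
          · have hin : i < n := by
              by_contra hc
              push_neg at hc
              exact hb ⟨n, hspec.1, hc, hspec.2⟩
            simp only [hgdef]
            rw [dif_neg hb]
            simp [hd1, hY2 n i hin]
        rw [hgY]
        have hba : bigAnd x = false := by
          simp only [bigAnd, decide_eq_false_iff_not]
          intro h
          obtain ⟨k, hk⟩ := hex
          rw [h k] at hk
          exact absurd hk (by simp)
        rw [hba, hY1 n, hx0']
        simp
    · push_neg at hex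
      have hex' : ∀ k, x k = true := fun k => by simpa using hex k
      have hgb : (fun i => g i x) = (fun _ => true) := by
        funext i
        have hd1 : ∃ j, j ≤ i ∧ x j = true := ⟨0, Nat.zero_le i, hex' 0⟩
        have hb : ¬ ∃ k, 1 ≤ k ∧ k ≤ i ∧ x k = false := by
          rintro ⟨k, _, _, hk3⟩
          rw [hex' k] at hk3
          exact absurd hk3 (by simp)
        simp only [hgdef]
        rw [dif_neg hb]
        simp [hd1]
      rw [hgb, htop, hex' 0]
      simp [bigAnd, hex']
  rw [hval]
  exact hmem

lemma gOr_of_bigOr (hF : IsClone F) (hfin : finRes F = {f | finitary f ∧ PresBot f ∧ PresTop f})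
    (h : (⟨none, bigOr⟩ : BFun) ∈ F) : (⟨none, gOr⟩ : BFun) ∈ F := by
  have ht := comp_omega F hF bigOr (fun m x => x (m+1)) h (fun m => hF.proj none (m+1))
  have := comp_two F hF hfin (· && ·) rfl rfl _ _ (hF.proj none 0) ht
  exact this

lemma gAnd_of_bigAnd (hF : IsClone F) (hfin : finRes F = {f | finitary f ∧ PresBot f ∧ PresTop f})
    (h : (⟨none, bigAnd⟩ : BFun) ∈ F) : (⟨none, gAnd⟩ : BFun) ∈ F := by
  have ht := comp_omega F hF bigAnd (fun m x => x (m+1)) h (fun m => hF.proj none (m+1))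
  have := comp_two F hF hfin (· || ·) rfl rfl _ _ (hF.proj none 0) ht
  exact this

/-- guarded or from guarded and -/
lemma gOr_of_gAnd (hF : IsClone F) (hfin : finRes F = {f | finitary f ∧ PresBot f ∧ PresTop f})
    (h : (⟨none, gAnd⟩ : BFun) ∈ F) : (⟨none, gOr⟩ : BFun) ∈ F := by
  set z : ℕ → (ℕ → Bool) → Bool := fun m w =>
    bif w (m+1) then (w 0 && decide (∀ i, i ≤ m → w (i+1) = true)) else w 0 with hzdef
  have hzF : ∀ m, (⟨none, z m⟩ : BFun) ∈ F := by
    intro m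
    apply mem_findep F hF hfin _ (m+1)
    · intro u u' huu
      have h0 : u 0 = u' 0 := huu 0 (Nat.succ_pos _)
      have hm1 : u (m+1) = u' (m+1) := huu (m+1) (Nat.lt_succ_self _)
      have e1 : (∀ i, i ≤ m → u (i+1) = true) = (∀ i, i ≤ m → u' (i+1) = true) := by
        apply propext; constructor <;> intro hh i hi
        · rw [← huu (i+1) (Nat.succ_lt_succ (Nat.lt_succ_of_le hi))]; exact hh i hi
        · rw [huu (i+1) (Nat.succ_lt_succ (Nat.lt_succ_of_le hi))]; exact hh i hi
      simp only [hzdef, h0, hm1, e1]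
    · simp [hzdef]
    · simp [hzdef]
  have hcF : (⟨none, fun w => w 0 && w 1 && w 2⟩ : BFun) ∈ F := by
    apply mem_findep F hF hfin _ 2
    · intro u u' huu
      rw [huu 0 (by norm_num), huu 1 (by norm_num), huu 2 (by norm_num)]
    · simp
    · simp
  have hUF : (⟨none, fun w => gAnd (fun j =>
      (Nat.casesOn j (fun w' => w' 0 && w' 1 && w' 2) z : (ℕ → Bool) → Bool) w)⟩ : BFun) ∈ F := by
    apply comp_omega F hF gAnd _ h
    intro j
    cases j with
    | zero => exact hcF
    | succ m => exact hzF m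
  have hV1 : (⟨none, fun w => w 0 && w 1⟩ : BFun) ∈ F :=
    comp_two F hF hfin (· && ·) rfl rfl _ _ (hF.proj none 0) (hF.proj none 1)
  have hfinal := comp_ite F hF hfin _ _ _ hUF hV1 (hF.proj none 0)
  have hval : gOr = fun w => bif (fun w => gAnd (fun j =>
      (Nat.casesOn j (fun w' => w' 0 && w' 1 && w' 2) z : (ℕ → Bool) → Bool) w)) w
        then (fun w => w 0 && w 1) w else (fun w => w 0) w := by
    funext w
    simp only []
    have hU : gAnd (fun j => (Nat.casesOn j (fun w' => w' 0 && w' 1 && w' 2) z :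
        (ℕ → Bool) → Bool) w) =
        ((w 0 && w 1 && w 2) || decide (∀ m, z m w = true)) := rfl
    rw [hU]
    cases ha : w 0 with
    | false =>
      have hz0 : z 0 w = false := by
        simp only [hzdef]
        cases h1 : w 1 <;> simp [ha]
      have hnall : ¬ (∀ m, z m w = true) := fun hh => by rw [hh 0] at hz0; simp at hz0
      simp [gOr, ha, hnall]
    | true =>
      by_cases hord : ∀ m, w (m+1) = true → (∀ i, i ≤ m → w (i+1) = true)
      · have hz : ∀ m, z m w = true := by
          intro m
          cases hm : w (m+1) with
          | false => simp [hzdef, hm, ha]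
          | true =>
            simp only [hzdef, hm, ha, cond_true, Bool.true_and]
            exact decide_eq_true (hord m hm)
        have hd : decide (∀ m, z m w = true) = true := decide_eq_true hz
        rw [hd]
        simp only [Bool.or_true, cond_true, Bool.true_and]
        cases h1 : w 1 with
        | true =>
          have : ∃ m, w (m+1) = true := ⟨0, h1⟩
          simp [gOr, ha, this]
        | false =>
          have : ¬ ∃ m, w (m+1) = true := by
            rintro ⟨m, hm⟩
            have := hord m hm 0 (Nat.zero_le m)
            rw [this] at h1; simp at h1
          simp [gOr, ha, this]
      · push_neg at hord
        obtain ⟨m₀, hm₀, i₀, hi₀, hbad⟩ := hord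
        have hbad' : w (i₀+1) = false := by simpa using hbad
        have hex : ∃ m, w (m+1) = true := ⟨m₀, hm₀⟩
        have hgOr : gOr w = true := by simp [gOr, ha, hex]
        rw [hgOr]
        have hzm : z m₀ w = false := by
          have : ¬ (∀ i, i ≤ m₀ → w (i+1) = true) := fun hh => by
            rw [hh i₀ hi₀] at hbad'; simp at hbad'
          simp [hzdef, hm₀, ha, this]
        have hnall : ¬ (∀ m, z m w = true) := fun hh => by rw [hh m₀] at hzm; simp at hzm
        have hd : decide (∀ m, z m w = true) = false := decide_eq_false hnall
        rw [hd]
        simp only [Bool.or_false, Bool.true_and]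
        cases h12 : (w 1 && w 2) with
        | false => simp [h12]
        | true =>
          simp only [cond_true]
          simp at h12
          simp [h12.1]
  rw [hval]
  exact hfinal

/-- guarded and from guarded or -/
lemma gAnd_of_gOr (hF : IsClone F) (hfin : finRes F = {f | finitary f ∧ PresBot f ∧ PresTop f})
    (h : (⟨none, gOr⟩ : BFun) ∈ F) : (⟨none, gAnd⟩ : BFun) ∈ F := by
  set z : ℕ → (ℕ → Bool) → Bool := fun m w =>
    bif w (m+1) then w 0 else (w 0 || decide (∃ i, i ≤ m ∧ w (i+1) = true)) with hzdef
  have hzF : ∀ m, (⟨none, z m⟩ : BFun) ∈ F := by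
    intro m
    apply mem_findep F hF hfin _ (m+1)
    · intro u u' huu
      have h0 : u 0 = u' 0 := huu 0 (Nat.succ_pos _)
      have hm1 : u (m+1) = u' (m+1) := huu (m+1) (Nat.lt_succ_self _)
      have e1 : (∃ i, i ≤ m ∧ u (i+1) = true) = (∃ i, i ≤ m ∧ u' (i+1) = true) := by
        apply propext; constructor <;> rintro ⟨i, hi, hiv⟩
        · exact ⟨i, hi, by rw [← huu (i+1) (Nat.succ_lt_succ (Nat.lt_succ_of_le hi))]; exact hiv⟩
        · exact ⟨i, hi, by rw [huu (i+1) (Nat.succ_lt_succ (Nat.lt_succ_of_le hi))]; exact hiv⟩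
      simp only [hzdef, h0, hm1, e1]
    · simp [hzdef]
    · simp [hzdef]
  have hcF : (⟨none, fun w => w 0 || w 1 || w 2⟩ : BFun) ∈ F := by
    apply mem_findep F hF hfin _ 2
    · intro u u' huu
      rw [huu 0 (by norm_num), huu 1 (by norm_num), huu 2 (by norm_num)]
    · simp
    · simp
  have hUF : (⟨none, fun w => gOr (fun j =>
      (Nat.casesOn j (fun w' => w' 0 || w' 1 || w' 2) z : (ℕ → Bool) → Bool) w)⟩ : BFun) ∈ F := by
    apply comp_omega F hF gOr _ h
    intro j
    cases j with
    | zero => exact hcF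
    | succ m => exact hzF m
  have hV1 : (⟨none, fun w => w 0 || w 1⟩ : BFun) ∈ F :=
    comp_two F hF hfin (· || ·) rfl rfl _ _ (hF.proj none 0) (hF.proj none 1)
  have hfinal := comp_ite F hF hfin _ _ _ hUF (hF.proj none 0) hV1
  have hval : gAnd = fun w => bif (fun w => gOr (fun j =>
      (Nat.casesOn j (fun w' => w' 0 || w' 1 || w' 2) z : (ℕ → Bool) → Bool) w)) w
        then (fun w => w 0) w else (fun w => w 0 || w 1) w := by
    funext w
    simp only []
    have hU : gOr (fun j => (Nat.casesOn j (fun w' => w' 0 || w' 1 || w' 2) z :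
        (ℕ → Bool) → Bool) w) =
        ((w 0 || w 1 || w 2) && decide (∃ m, z m w = true)) := rfl
    rw [hU]
    cases ha : w 0 with
    | true =>
      cases hV : ((true || w 1 || w 2) && decide (∃ m, z m w = true)) <;> simp [gAnd, ha, hV]
    | false =>
      by_cases hall : ∀ m, w (m+1) = true
      · have hz : ∀ m, z m w = false := by
          intro m
          simp [hzdef, hall m, ha]
        have hd : decide (∃ m, z m w = true) = false := by
          apply decide_eq_false
          rintro ⟨m, hm⟩
          rw [hz m] at hm; simp at hm
        rw [hd]
        simp [gAnd, ha, hall, hall 0]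
      · have hLHS : gAnd w = false := by
          simp only [gAnd, ha, Bool.false_or]
          exact decide_eq_false hall
        rw [hLHS]
        push_neg at hall
        obtain ⟨m₀, hm₀⟩ := hall
        have hm₀' : w (m₀+1) = false := by simpa using hm₀
        cases h1 : w 1 with
        | true =>
          have hzm : z m₀ w = true := by
            have he : ∃ i, i ≤ m₀ ∧ w (i+1) = true := ⟨0, Nat.zero_le m₀, h1⟩
            simp [hzdef, hm₀', ha, he]
          have hd : decide (∃ m, z m w = true) = true := decide_eq_true ⟨m₀, hzm⟩
          rw [hd]
          simp
        | false =>
          cases hV : ((false || w 1 || w 2) && decide (∃ m, z m w = true)) <;>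
            simp [ha, h1, hV]
  rw [hval]
  exact hfinal

/-- conditional (if a then big-or else big-and) from both guarded versions -/
lemma gIf_mem (hF : IsClone F) (hfin : finRes F = {f | finitary f ∧ PresBot f ∧ PresTop f})
    (hO : (⟨none, gOr⟩ : BFun) ∈ F) (hA : (⟨none, gAnd⟩ : BFun) ∈ F) :
    (⟨none, gIf⟩ : BFun) ∈ F := by
  have hcomp : (⟨none, fun w => gAnd (fun j =>
      (Nat.casesOn j gOr (fun m w' => w' (m+1)) : (ℕ → Bool) → Bool) w)⟩ : BFun) ∈ F := by
    apply comp_omega F hF gAnd _ hA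
    intro j
    cases j with
    | zero => exact hO
    | succ m => exact hF.proj none (m+1)
  have hval : gIf = fun w => gAnd (fun j =>
      (Nat.casesOn j gOr (fun m w' => w' (m+1)) : (ℕ → Bool) → Bool) w) := by
    funext w
    have hU : gAnd (fun j => (Nat.casesOn j gOr (fun m w' => w' (m+1)) :
        (ℕ → Bool) → Bool) w) =
        (gOr w || decide (∀ m, w (m+1) = true)) := rfl
    rw [hU]
    cases ha : w 0 with
    | false => simp [gIf, gOr, ha]
    | true =>
      simp only [gIf, gOr, ha, cond_true, Bool.true_and]
      by_cases hall : ∀ m, w (m+1) = true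
      · have he : ∃ m, w (m+1) = true := ⟨0, hall 0⟩
        simp [he, hall]
      · simp [hall]
  rw [hval]
  exact hcomp

lemma generate_meas (B : Set (ℕ → Bool)) (hB : MeasurableSet B) :
    MeasurableSpace.GenerateMeasurable {S | ∃ i : ℕ, S = {x : ℕ → Bool | x i = true}} B := by
  set G : Set (Set (ℕ → Bool)) := {S | ∃ i : ℕ, S = {x : ℕ → Bool | x i = true}} with hG
  have hle : (MeasurableSpace.pi : MeasurableSpace (ℕ → Bool)) ≤
      MeasurableSpace.generateFrom G := by
    refine iSup_le fun i => ?_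
    have hm : @Measurable (ℕ → Bool) Bool (MeasurableSpace.generateFrom G)
        inferInstance (fun x => x i) := by
      intro s _
      have hmemG : {x : ℕ → Bool | x i = true} ∈ G := ⟨i, rfl⟩
      have hbasic := MeasurableSpace.measurableSet_generateFrom hmemG
      by_cases ht : true ∈ s <;> by_cases hf : false ∈ s
      · have he : (fun x : ℕ → Bool => x i) ⁻¹' s = Set.univ := by
          ext x; cases hx : x i <;> simp [hx, ht, hf]
        rw [he]; exact @MeasurableSet.univ _ (MeasurableSpace.generateFrom G)
      · have he : (fun x : ℕ → Bool => x i) ⁻¹' s = {x : ℕ → Bool | x i = true} := by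
          ext x; cases hx : x i <;> simp [hx, ht, hf]
        rw [he]
        exact hbasic
      · have he : (fun x : ℕ → Bool => x i) ⁻¹' s = {x : ℕ → Bool | x i = true}ᶜ := by
          ext x; cases hx : x i <;> simp [hx, ht, hf]
        rw [he]
        exact hbasic.compl
      · have he : (fun x : ℕ → Bool => x i) ⁻¹' s = ∅ := by
          ext x; cases hx : x i <;> simp [hx, ht, hf]
        rw [he]; exact @MeasurableSet.empty _ (MeasurableSpace.generateFrom G)
    exact measurable_iff_comap_le.mp hm
  exact hle B hB

lemma T_mem (hF : IsClone F) (hfin : finRes F = {f | finitary f ∧ PresBot f ∧ PresTop f})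
    (hIf : (⟨none, gIf⟩ : BFun) ∈ F) (B : Set (ℕ → Bool)) (hB : MeasurableSet B) :
    (⟨none, Tfun B⟩ : BFun) ∈ F := by
  have hgen := generate_meas B hB
  clear hB
  induction hgen with
  | basic u hu =>
    obtain ⟨i, rfl⟩ := hu
    apply mem_findep F hF hfin _ (i+2)
    · intro z z' hzz
      simp only [Tfun, Set.mem_setOf_eq]
      by_cases hc : z (i+2) = true
      · rw [if_pos hc, if_pos (by rw [← hzz (i+2) (by omega)]; exact hc), hzz 0 (by omega)]
      · rw [if_neg hc, if_neg (by rw [← hzz (i+2) (by omega)]; exact hc), hzz 1 (by omega)]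
    · simp [Tfun]
    · simp [Tfun]
  | empty =>
    have he : Tfun ∅ = fun w => w 1 := by
      funext w; simp [Tfun]
    rw [he]
    exact hF.proj none 1
  | compl s hs ih =>
    set sw : (ℕ → Bool) → ℕ → Bool := fun w j =>
      if j = 0 then w 1 else if j = 1 then w 0 else w j with hsw
    have hswap : (⟨none, fun w => Tfun s (fun j => sw w j)⟩ : BFun) ∈ F := by
      apply comp_omega F hF (Tfun s) (fun j w => sw w j) ih
      intro j
      by_cases hj0 : j = 0
      · simpa [hsw, hj0] using hF.proj none 1
      · by_cases hj1 : j = 1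
        · simpa [hsw, hj0, hj1] using hF.proj none 0
        · simpa [hsw, hj0, hj1] using hF.proj none j
    have hval : Tfun sᶜ = fun w => Tfun s (fun j => sw w j) := by
      funext w
      have hinner : (fun i => sw w (i+2)) = fun i => w (i+2) := by
        funext i
        simp only [hsw]
        rw [if_neg (by omega : ¬ i + 2 = 0), if_neg (by omega : ¬ i + 2 = 1)]
      have h0 : sw w 0 = w 1 := rfl
      have h1 : sw w 1 = w 0 := rfl
      simp only [Tfun, hinner, h0, h1]
      by_cases hx : (fun i => w (i+2)) ∈ s
      · rw [if_pos hx, if_neg (by simpa using hx)]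
      · rw [if_neg hx, if_pos (by simpa using hx)]
    rw [hval]
    exact hswap
  | iUnion f hf ih =>
    have hcomp : (⟨none, fun w => gIf (fun j =>
        (Nat.casesOn j (fun w' : ℕ → Bool => w' 0) (fun m => Tfun (f m)) :
          (ℕ → Bool) → Bool) w)⟩ : BFun) ∈ F := by
      apply comp_omega F hF gIf _ hIf
      intro j
      cases j with
      | zero => exact hF.proj none 0
      | succ m => exact ih m
    have hval : Tfun (⋃ n, f n) = fun w => gIf (fun j =>
        (Nat.casesOn j (fun w' : ℕ → Bool => w' 0) (fun m => Tfun (f m)) :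
          (ℕ → Bool) → Bool) w) := by
      funext w
      have hU : gIf (fun j => (Nat.casesOn j (fun w' : ℕ → Bool => w' 0)
          (fun m => Tfun (f m)) : (ℕ → Bool) → Bool) w) =
          (bif w 0 then decide (∃ m, Tfun (f m) w = true)
            else decide (∀ m, Tfun (f m) w = true)) := rfl
      rw [hU]
      by_cases hx : (fun i => w (i+2)) ∈ ⋃ n, f n
      · obtain ⟨n, hn⟩ := Set.mem_iUnion.mp hx
        have hTn : Tfun (f n) w = w 0 := by simp [Tfun, hn]
        have hL : Tfun (⋃ n, f n) w = w 0 := by simp [Tfun, hx]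
        rw [hL]
        cases ha : w 0 with
        | true =>
          rw [cond_true, decide_eq_true ⟨n, hTn.trans ha⟩]
        | false =>
          rw [cond_false]
          symm
          apply decide_eq_false
          intro hh
          have := hh n
          rw [hTn, ha] at this
          simp at this
      · have hTn : ∀ m, Tfun (f m) w = w 1 := by
          intro m
          have hnm : ¬ ((fun i => w (i+2)) ∈ f m) := fun hc => hx (Set.mem_iUnion.mpr ⟨m, hc⟩)
          simp [Tfun, hnm]
        have hL : Tfun (⋃ n, f n) w = w 1 := by simp [Tfun, hx]
        rw [hL]
        cases ha : w 0 with
        | true =>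
          rw [cond_true]
          cases h1 : w 1 with
          | true => rw [decide_eq_true ⟨0, (hTn 0).trans h1⟩]
          | false =>
            symm
            apply decide_eq_false
            rintro ⟨m, hm⟩
            rw [hTn m, h1] at hm
            simp at hm
        | false =>
          rw [cond_false]
          cases h1 : w 1 with
          | true => rw [decide_eq_true (fun m => (hTn m).trans h1)]
          | false =>
            symm
            apply decide_eq_false
            intro hh
            have := hh 0
            rw [hTn 0, h1] at this
            simp at this
    rw [hval]
    exact hcomp

lemma gAnd_of_hyp1 (hF : IsClone F) (hfin : finRes F = {f | finitary f ∧ PresBot f ∧ PresTop f})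
    (h : (ℕ → Bool) → Bool) (hhF : (⟨none, h⟩ : BFun) ∈ F) (p : ℕ → Bool)
    (hp : h p = true) (hcl : p ∈ closure {x | h x = false}) :
    (⟨none, gAnd⟩ : BFun) ∈ F := by
  have hQe : ∀ n, ∃ x, h x = false ∧ ∀ i < n, x i = p i := by
    intro n
    obtain ⟨x, hx1, hx2⟩ := (mem_closure_iff_nat _ _).mp hcl n
    exact ⟨x, hx2, hx1⟩
  choose Q hQ1 hQ2 using hQe
  set Ψ : ℕ → (ℕ → Bool) → Bool := fun i w =>
    if hx : ∃ m, m ≤ i ∧ w (m+1) = false then Q (Nat.find hx) i else p i with hΨdef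
  set Ψ' : ℕ → (ℕ → Bool) → Bool := fun i w =>
    (Ψ i w && w 1) || (w 0 && decide (∀ j, j ≤ i → w (j+1) = true)) with hΨ'def
  have hΨcongr : ∀ i (u u' : ℕ → Bool), (∀ m, m ≤ i → u (m+1) = u' (m+1)) →
      Ψ i u = Ψ i u' := by
    intro i u u' hm
    simp only [hΨdef]
    by_cases hb : ∃ m, m ≤ i ∧ u (m+1) = false
    · obtain ⟨m, hm1, hm2⟩ := hb
      have hb : ∃ m, m ≤ i ∧ u (m+1) = false := ⟨m, hm1, hm2⟩
      have hb' : ∃ m, m ≤ i ∧ u' (m+1) = false :=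
        ⟨m, hm1, by rw [← hm m hm1]; exact hm2⟩
      rw [dif_pos hb, dif_pos hb']
      have : Nat.find hb = Nat.find hb' := by
        apply le_antisymm
        · have hs := Nat.find_spec hb'
          exact Nat.find_min' hb ⟨hs.1, by rw [hm _ hs.1]; exact hs.2⟩
        · have hs := Nat.find_spec hb
          exact Nat.find_min' hb' ⟨hs.1, by rw [← hm _ hs.1]; exact hs.2⟩
      rw [this]
    · have hb' : ¬ ∃ m, m ≤ i ∧ u' (m+1) = false := by
        rintro ⟨m, hm1, hm2⟩
        exact hb ⟨m, hm1, by rw [hm m hm1]; exact hm2⟩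
      rw [dif_neg hb, dif_neg hb']
  have hΨ'F : ∀ i, (⟨none, Ψ' i⟩ : BFun) ∈ F := by
    intro i
    apply mem_findep F hF hfin _ (i+1)
    · intro u u' huu
      have h0 : u 0 = u' 0 := huu 0 (by omega)
      have h1 : u 1 = u' 1 := huu 1 (by omega)
      have hmm : ∀ m, m ≤ i → u (m+1) = u' (m+1) := fun m hm => huu (m+1) (by omega)
      have e1 : (∀ j, j ≤ i → u (j+1) = true) = (∀ j, j ≤ i → u' (j+1) = true) := by
        apply propext; constructor <;> intro hh j hj
        · rw [← hmm j hj]; exact hh j hj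
        · rw [hmm j hj]; exact hh j hj
      simp only [hΨ'def, h0, h1, e1, hΨcongr i u u' hmm]
    · simp [hΨ'def]
    · simp only [hΨ'def]
      simp
  have hinner : (⟨none, fun w => h (fun i => Ψ' i w)⟩ : BFun) ∈ F :=
    comp_omega F hF h Ψ' hhF hΨ'F
  have hmem1 : (⟨none, fun w => w 1 && h (fun i => Ψ' i w)⟩ : BFun) ∈ F :=
    comp_two F hF hfin (· && ·) rfl rfl _ _ (hF.proj none 1) hinner
  have hmem : (⟨none, fun w => w 0 || (w 1 && h (fun i => Ψ' i w))⟩ : BFun) ∈ F :=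
    comp_two F hF hfin (· || ·) rfl rfl _ _ (hF.proj none 0) hmem1
  have hval : gAnd = fun w => w 0 || (w 1 && h (fun i => Ψ' i w)) := by
    funext w
    cases ha : w 0 with
    | true => simp [gAnd, ha]
    | false =>
      cases h1 : w 1 with
      | false =>
        have hng : ¬ ∀ m, w (m+1) = true := fun hh => by rw [hh 0] at h1; simp at h1
        simp [gAnd, ha, h1, hng]
      | true =>
        have hΨ'v : ∀ i, Ψ' i w = Ψ i w := by
          intro i
          simp [hΨ'def, ha, h1]
        by_cases hall : ∀ m, w (m+1) = true
        · have hΨv : ∀ i, Ψ i w = p i := by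
            intro i
            have hnb : ¬ ∃ m, m ≤ i ∧ w (m+1) = false := by
              rintro ⟨m, _, hm2⟩
              rw [hall m] at hm2; simp at hm2
            simp [hΨdef, hnb]
          have : (fun i => Ψ' i w) = p := by
            funext i; rw [hΨ'v i, hΨv i]
          rw [this, hp]
          simp [gAnd, ha, h1, hall]
        · have hn : ∃ m, w (m+1) = false := by
            push_neg at hall
            obtain ⟨m, hm⟩ := hall
            exact ⟨m, by simpa using hm⟩
          set n := Nat.find hn with hndef
          have hspec : w (n+1) = false := Nat.find_spec hn
          have hQn : (fun i => Ψ' i w) = Q n := by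
            funext i
            rw [hΨ'v i]
            by_cases hb : ∃ m, m ≤ i ∧ w (m+1) = false
            · have hbs := Nat.find_spec hb
              have hni : n ≤ i := le_trans (Nat.find_min' hn hbs.2) hbs.1
              have hfind : Nat.find hb = n := by
                apply le_antisymm
                · exact Nat.find_min' hb ⟨hni, hspec⟩
                · exact Nat.find_min' hn hbs.2
              simp only [hΨdef]
              rw [dif_pos hb, hfind]
            · have hin : i < n := by
                by_contra hc
                push_neg at hc
                exact hb ⟨n, hc, hspec⟩
              simp only [hΨdef]
              rw [dif_neg hb]
              exact (hQ2 n i hin).symm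
          rw [hQn, hQ1 n]
          have hng : ¬ ∀ m, w (m+1) = true := fun hh => by rw [hh n] at hspec; simp at hspec
          simp [gAnd, ha, hng]
  rw [hval]
  exact hmem

lemma gOr_of_hyp0 (hF : IsClone F) (hfin : finRes F = {f | finitary f ∧ PresBot f ∧ PresTop f})
    (h : (ℕ → Bool) → Bool) (hhF : (⟨none, h⟩ : BFun) ∈ F) (p : ℕ → Bool)
    (hp : h p = false) (hcl : p ∈ closure {x | h x = true}) :
    (⟨none, gOr⟩ : BFun) ∈ F := by
  have hQe : ∀ n, ∃ x, h x = true ∧ ∀ i < n, x i = p i := by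
    intro n
    obtain ⟨x, hx1, hx2⟩ := (mem_closure_iff_nat _ _).mp hcl n
    exact ⟨x, hx2, hx1⟩
  choose Q hQ1 hQ2 using hQe
  set Ψ : ℕ → (ℕ → Bool) → Bool := fun i w =>
    if hx : ∃ m, m ≤ i ∧ w (m+1) = true then Q (Nat.find hx) i else p i with hΨdef
  set Ψ' : ℕ → (ℕ → Bool) → Bool := fun i w =>
    (Ψ i w || w 1) && (w 0 || decide (∃ j, j ≤ i ∧ w (j+1) = true)) with hΨ'def
  have hΨcongr : ∀ i (u u' : ℕ → Bool), (∀ m, m ≤ i → u (m+1) = u' (m+1)) →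
      Ψ i u = Ψ i u' := by
    intro i u u' hm
    simp only [hΨdef]
    by_cases hb : ∃ m, m ≤ i ∧ u (m+1) = true
    · obtain ⟨m, hm1, hm2⟩ := hb
      have hb : ∃ m, m ≤ i ∧ u (m+1) = true := ⟨m, hm1, hm2⟩
      have hb' : ∃ m, m ≤ i ∧ u' (m+1) = true :=
        ⟨m, hm1, by rw [← hm m hm1]; exact hm2⟩
      rw [dif_pos hb, dif_pos hb']
      have : Nat.find hb = Nat.find hb' := by
        apply le_antisymm
        · have hs := Nat.find_spec hb'
          exact Nat.find_min' hb ⟨hs.1, by rw [hm _ hs.1]; exact hs.2⟩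
        · have hs := Nat.find_spec hb
          exact Nat.find_min' hb' ⟨hs.1, by rw [← hm _ hs.1]; exact hs.2⟩
      rw [this]
    · have hb' : ¬ ∃ m, m ≤ i ∧ u' (m+1) = true := by
        rintro ⟨m, hm1, hm2⟩
        exact hb ⟨m, hm1, by rw [hm m hm1]; exact hm2⟩
      rw [dif_neg hb, dif_neg hb']
  have hΨ'F : ∀ i, (⟨none, Ψ' i⟩ : BFun) ∈ F := by
    intro i
    apply mem_findep F hF hfin _ (i+1)
    · intro u u' huu
      have h0 : u 0 = u' 0 := huu 0 (by omega)
      have h1 : u 1 = u' 1 := huu 1 (by omega)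
      have hmm : ∀ m, m ≤ i → u (m+1) = u' (m+1) := fun m hm => huu (m+1) (by omega)
      have e1 : (∃ j, j ≤ i ∧ u (j+1) = true) = (∃ j, j ≤ i ∧ u' (j+1) = true) := by
        apply propext; constructor <;> rintro ⟨j, hj, hjv⟩
        · exact ⟨j, hj, by rw [← hmm j hj]; exact hjv⟩
        · exact ⟨j, hj, by rw [hmm j hj]; exact hjv⟩
      simp only [hΨ'def, h0, h1, e1, hΨcongr i u u' hmm]
    · simp [hΨ'def]
    · simp only [hΨ'def]
      simp
  have hinner : (⟨none, fun w => h (fun i => Ψ' i w)⟩ : BFun) ∈ F :=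
    comp_omega F hF h Ψ' hhF hΨ'F
  have hmem1 : (⟨none, fun w => w 1 || h (fun i => Ψ' i w)⟩ : BFun) ∈ F :=
    comp_two F hF hfin (· || ·) rfl rfl _ _ (hF.proj none 1) hinner
  have hmem : (⟨none, fun w => w 0 && (w 1 || h (fun i => Ψ' i w))⟩ : BFun) ∈ F :=
    comp_two F hF hfin (· && ·) rfl rfl _ _ (hF.proj none 0) hmem1
  have hval : gOr = fun w => w 0 && (w 1 || h (fun i => Ψ' i w)) := by
    funext w
    cases ha : w 0 with
    | false => simp [gOr, ha]
    | true =>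
      cases h1 : w 1 with
      | true =>
        have hg : ∃ m, w (m+1) = true := ⟨0, h1⟩
        simp [gOr, ha, h1, hg]
      | false =>
        have hΨ'v : ∀ i, Ψ' i w = Ψ i w := by
          intro i
          simp [hΨ'def, ha, h1]
        by_cases hall : ¬ ∃ m, w (m+1) = true
        · have hΨv : ∀ i, Ψ i w = p i := by
            intro i
            have hnb : ¬ ∃ m, m ≤ i ∧ w (m+1) = true := by
              rintro ⟨m, _, hm2⟩
              exact hall ⟨m, hm2⟩
            simp [hΨdef, hnb]
          have : (fun i => Ψ' i w) = p := by
            funext i; rw [hΨ'v i, hΨv i]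
          rw [this, hp]
          simp [gOr, ha, h1, hall]
        · push_neg at hall
          have hn : ∃ m, w (m+1) = true := hall
          set n := Nat.find hn with hndef
          have hspec : w (n+1) = true := Nat.find_spec hn
          have hQn : (fun i => Ψ' i w) = Q n := by
            funext i
            rw [hΨ'v i]
            by_cases hb : ∃ m, m ≤ i ∧ w (m+1) = true
            · have hbs := Nat.find_spec hb
              have hni : n ≤ i := le_trans (Nat.find_min' hn hbs.2) hbs.1
              have hfind : Nat.find hb = n := by
                apply le_antisymm
                · exact Nat.find_min' hb ⟨hni, hspec⟩
                · exact Nat.find_min' hn hbs.2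
              simp only [hΨdef]
              rw [dif_pos hb, hfind]
            · have hin : i < n := by
                by_contra hc
                push_neg at hc
                exact hb ⟨n, hc, hspec⟩
              simp only [hΨdef]
              rw [dif_neg hb]
              exact (hQ2 n i hin).symm
          rw [hQn, hQ1 n]
          have hg : ∃ m, w (m+1) = true := hn
          simp [gOr, ha, hg]
  rw [hval]
  exact hmem

lemma omega_mem (hF : IsClone F) (hfin : finRes F = {f | finitary f ∧ PresBot f ∧ PresTop f})
    (hIf : (⟨none, gIf⟩ : BFun) ∈ F) (g : (ℕ → Bool) → Bool)
    (hmeas : MeasurableSet {x | g x = true})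
    (aslot bslot : (ℕ → Bool) → Bool)
    (haF : (⟨none, aslot⟩ : BFun) ∈ F) (hbF : (⟨none, bslot⟩ : BFun) ∈ F)
    (ha : ∀ z, g z = true → aslot z = true) (hb : ∀ z, g z = false → bslot z = false) :
    (⟨none, g⟩ : BFun) ∈ F := by
  have hT := T_mem F hF hfin hIf {x | g x = true} hmeas
  set t : ℕ → (ℕ → Bool) → Bool := fun j =>
    if j = 0 then aslot else if j = 1 then bslot else fun z => z (j - 2) with htdef
  have htF : ∀ j, (⟨none, t j⟩ : BFun) ∈ F := by
    intro j
    by_cases hj0 : j = 0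
    · simpa [htdef, hj0] using haF
    · by_cases hj1 : j = 1
      · simpa [htdef, hj0, hj1] using hbF
      · simpa [htdef, hj0, hj1] using hF.proj none (j - 2)
  have hcomp := comp_omega F hF (Tfun {x | g x = true}) t hT htF
  have hval : g = fun z => Tfun {x | g x = true} (fun j => t j z) := by
    funext z
    have hinner : (fun i => t (i+2) z) = z := by
      funext i
      simp only [htdef]
      rw [if_neg (by omega : ¬ i + 2 = 0), if_neg (by omega : ¬ i + 2 = 1)]
      simp
    have h0 : t 0 z = aslot z := rfl
    have h1 : t 1 z = bslot z := rfl
    simp only [Tfun, hinner, h0, h1]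
    by_cases hg : g z = true
    · rw [if_pos (show z ∈ {x | g x = true} from hg), ha z hg, hg]
    · have hgf : g z = false := by simpa using hg
      rw [if_neg (show z ∉ {x | g x = true} from hg), hb z hgf, hgf]
  rw [hval]
  exact hcomp

lemma slotOr_mem (hF : IsClone F)
    (hfin : finRes F = {f | finitary f ∧ PresBot f ∧ PresTop f}) (I : Finset ℕ) :
    (⟨none, fun z => decide (∃ i, i ∈ insert 0 I ∧ z i = true)⟩ : BFun) ∈ F := by
  apply mem_findep F hF hfin _ ((insert 0 I).sup id)
  · intro z z' hzz
    have e1 : (∃ i, i ∈ insert 0 I ∧ z i = true) ↔ (∃ i, i ∈ insert 0 I ∧ z' i = true) := by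
      constructor <;> rintro ⟨i, hi, hiv⟩
      · exact ⟨i, hi, by rw [← hzz i (Nat.lt_succ_of_le (Finset.le_sup (f := id) hi))]; exact hiv⟩
      · exact ⟨i, hi, by rw [hzz i (Nat.lt_succ_of_le (Finset.le_sup (f := id) hi))]; exact hiv⟩
    exact decide_eq_decide.mpr e1
  · simp
  · simp only [decide_eq_true_eq]
    exact ⟨0, Finset.mem_insert_self 0 I, by simp⟩

lemma slotAnd_mem (hF : IsClone F)
    (hfin : finRes F = {f | finitary f ∧ PresBot f ∧ PresTop f}) (I : Finset ℕ) :
    (⟨none, fun z => decide (∀ i, i ∈ insert 0 I → z i = true)⟩ : BFun) ∈ F := by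
  apply mem_findep F hF hfin _ ((insert 0 I).sup id)
  · intro z z' hzz
    have e1 : (∀ i, i ∈ insert 0 I → z i = true) ↔ (∀ i, i ∈ insert 0 I → z' i = true) := by
      constructor <;> intro hh i hi
      · rw [← hzz i (Nat.lt_succ_of_le (Finset.le_sup (f := id) hi))]; exact hh i hi
      · rw [hzz i (Nat.lt_succ_of_le (Finset.le_sup (f := id) hi))]; exact hh i hi
    exact decide_eq_decide.mpr e1
  · simp only [decide_eq_false_iff_not]
    intro hh
    have := hh 0 (Finset.mem_insert_self 0 I)
    simp at this
  · simp

end PartC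

section Facts

lemma bool_eq_true_of_ne_false {b : Bool} (h : b ≠ false) : b = true := by
  cases b
  · exact absurd rfl h
  · rfl

lemma presBot_of_V (f : BFun) (h : VanishNearBot f) : PresBot f := by
  by_contra hc
  have hmem : (fun _ => false) ∈ {x | f.2 x = true} := bool_eq_true_of_ne_false hc
  exact h (subset_closure hmem)

lemma presTop_of_O (f : BFun) (h : OneNearTop f) : PresTop f := by
  by_contra hc
  have hmem : (fun _ => true) ∈ {x | f.2 x = false} := by
    simp only [Set.mem_setOf_eq]
    cases hv : f.2 (fun _ => true)
    · rfl
    · exact absurd hv hc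
  exact h (subset_closure hmem)

lemma fin_V (n : ℕ+) (φ : (Fin (n : ℕ) → Bool) → Bool)
    (hb : φ (fun _ => false) = false) : VanishNearBot ⟨some n, φ⟩ := by
  intro hmem
  rw [IsClosed.closure_eq (isClosed_discrete _)] at hmem
  have h2 : φ (fun _ => false) = true := hmem
  rw [hb] at h2
  exact absurd h2 (by simp)

lemma fin_O (n : ℕ+) (φ : (Fin (n : ℕ) → Bool) → Bool)
    (ht : φ (fun _ => true) = true) : OneNearTop ⟨some n, φ⟩ := by
  intro hmem
  rw [IsClosed.closure_eq (isClosed_discrete _)] at hmem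
  have h2 : φ (fun _ => true) = false := hmem
  rw [ht] at h2
  exact absurd h2 (by simp)

lemma fin_cont (n : ℕ+) (φ : (Fin (n : ℕ) → Bool) → Bool) : IsContFun ⟨some n, φ⟩ :=
  continuous_of_discreteTopology

lemma fin_borel (n : ℕ+) (φ : (Fin (n : ℕ) → Bool) → Bool) : IsBorelFun ⟨some n, φ⟩ :=
  (Set.toFinite _).measurableSet

/-- characterization of VanishNearBot via finite sets of coordinates -/
lemma V_iff (a : Arity) (φ : (Idx a → Bool) → Bool) :
    VanishNearBot ⟨a, φ⟩ ↔ ∃ I : Finset (Idx a), ∀ x, (∀ i ∈ I, x i = false) → φ x = false := by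
  rw [show VanishNearBot ⟨a, φ⟩ ↔
    ((fun _ => false) ∉ closure {x : Idx a → Bool | φ x = true}) from Iff.rfl]
  rw [notMem_closure_iff]
  constructor
  · rintro ⟨I, hI⟩
    refine ⟨I, fun x hx => ?_⟩
    have := hI x hx
    simp only [Set.mem_setOf_eq] at this
    cases hv : φ x
    · rfl
    · exact absurd hv this
  · rintro ⟨I, hI⟩
    refine ⟨I, fun x hx hmem => ?_⟩
    rw [Set.mem_setOf_eq, hI x hx] at hmem
    exact absurd hmem (by simp)

lemma O_iff (a : Arity) (φ : (Idx a → Bool) → Bool) :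
    OneNearTop ⟨a, φ⟩ ↔ ∃ I : Finset (Idx a), ∀ x, (∀ i ∈ I, x i = true) → φ x = true := by
  rw [show OneNearTop ⟨a, φ⟩ ↔
    ((fun _ => true) ∉ closure {x : Idx a → Bool | φ x = false}) from Iff.rfl]
  rw [notMem_closure_iff]
  constructor
  · rintro ⟨I, hI⟩
    refine ⟨I, fun x hx => ?_⟩
    have := hI x hx
    simp only [Set.mem_setOf_eq] at this
    cases hv : φ x
    · exact absurd hv this
    · rfl
  · rintro ⟨I, hI⟩
    refine ⟨I, fun x hx hmem => ?_⟩
    rw [Set.mem_setOf_eq, hI x hx] at hmem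
    exact absurd hmem (by simp)

lemma borel_comp (a b : Arity) (g : (Idx a → Bool) → Bool)
    (f : Idx a → (Idx b → Bool) → Bool)
    (hg : MeasurableSet {x | g x = true}) (hf : ∀ i, MeasurableSet {x | f i x = true}) :
    MeasurableSet {x : Idx b → Bool | g (fun i => f i x) = true} := by
  have hmap : Measurable (fun (x : Idx b → Bool) (i : Idx a) => f i x) :=
    measurable_pi_lambda _ (fun i => measurable_of_set _ (hf i))
  have hgm : Measurable g := measurable_of_set _ hg
  exact (hgm.comp hmap) (show MeasurableSet {true} from trivial)

lemma V_comp (a b : Arity) (g : (Idx a → Bool) → Bool)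
    (f : Idx a → (Idx b → Bool) → Bool)
    (hg : VanishNearBot ⟨a, g⟩) (hf : ∀ i, VanishNearBot ⟨b, f i⟩) :
    VanishNearBot (⟨b, fun x => g (fun i => f i x)⟩ : BFun) := by
  rw [V_iff] at hg ⊢
  obtain ⟨I, hI⟩ := hg
  have hJ : ∀ i : Idx a, ∃ J : Finset (Idx b), ∀ x, (∀ j ∈ J, x j = false) → f i x = false := by
    intro i
    exact (V_iff b (f i)).mp (hf i)
  choose J hJ using hJ
  refine ⟨I.biUnion J, fun x hx => ?_⟩
  apply hI
  intro i hi
  apply hJ i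
  intro j hj
  exact hx j (Finset.mem_biUnion.mpr ⟨i, hi, hj⟩)

lemma O_comp (a b : Arity) (g : (Idx a → Bool) → Bool)
    (f : Idx a → (Idx b → Bool) → Bool)
    (hg : OneNearTop ⟨a, g⟩) (hf : ∀ i, OneNearTop ⟨b, f i⟩) :
    OneNearTop (⟨b, fun x => g (fun i => f i x)⟩ : BFun) := by
  rw [O_iff] at hg ⊢
  obtain ⟨I, hI⟩ := hg
  have hJ : ∀ i : Idx a, ∃ J : Finset (Idx b), ∀ x, (∀ j ∈ J, x j = true) → f i x = true := by
    intro i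
    exact (O_iff b (f i)).mp (hf i)
  choose J hJ using hJ
  refine ⟨I.biUnion J, fun x hx => ?_⟩
  apply hI
  intro i hi
  apply hJ i
  intro j hj
  exact hx j (Finset.mem_biUnion.mpr ⟨i, hi, hj⟩)

lemma cont_comp (a b : Arity) (g : (Idx a → Bool) → Bool)
    (f : Idx a → (Idx b → Bool) → Bool)
    (hg : Continuous g) (hf : ∀ i, Continuous (f i)) :
    Continuous (fun x : Idx b → Bool => g (fun i => f i x)) :=
  hg.comp (continuous_pi hf)

lemma proj_borel (a : Arity) (i : Idx a) :
    MeasurableSet {x : Idx a → Bool | x i = true} := by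
  have he : {x : Idx a → Bool | x i = true} = (fun x : Idx a → Bool => x i) ⁻¹' {true} := rfl
  rw [he]
  exact (measurable_pi_apply i) (show MeasurableSet {true} from trivial)

lemma proj_V (a : Arity) (i : Idx a) : VanishNearBot (⟨a, fun x => x i⟩ : BFun) :=
  (V_iff a _).mpr ⟨{i}, fun x hx => hx i (Finset.mem_singleton_self i)⟩

lemma proj_O (a : Arity) (i : Idx a) : OneNearTop (⟨a, fun x => x i⟩ : BFun) :=
  (O_iff a _).mpr ⟨{i}, fun x hx => hx i (Finset.mem_singleton_self i)⟩

lemma cont_borel (f : BFun) (h : IsContFun f) : IsBorelFun f := by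
  obtain ⟨a, φ⟩ := f
  cases a with
  | none =>
    have : IsOpen {x : ℕ → Bool | φ x = true} := (isOpen_discrete {true}).preimage h
    exact this.measurableSet
  | some n => exact fin_borel n φ

lemma isClone_C01 : IsClone C01 := by
  constructor
  · intro a i
    exact ⟨proj_borel a i, rfl, rfl⟩
  · rintro a b g f ⟨hgB, hgb, hgt⟩ hf
    refine ⟨borel_comp a b g f hgB (fun i => (hf i).1), ?_, ?_⟩
    · show g (fun i => f i (fun _ => false)) = false
      have : (fun i => f i (fun _ => false)) = (fun _ => false) :=
        funext fun i => (hf i).2.1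
      rw [this]; exact hgb
    · show g (fun i => f i (fun _ => true)) = true
      have : (fun i => f i (fun _ => true)) = (fun _ => true) :=
        funext fun i => (hf i).2.2
      rw [this]; exact hgt

lemma isClone_C02 : IsClone C02 := by
  constructor
  · intro a i
    exact ⟨proj_borel a i, rfl, proj_O a i⟩
  · rintro a b g f ⟨hgB, hgb, hgt⟩ hf
    refine ⟨borel_comp a b g f hgB (fun i => (hf i).1), ?_, ?_⟩
    · show g (fun i => f i (fun _ => false)) = false
      have : (fun i => f i (fun _ => false)) = (fun _ => false) :=
        funext fun i => (hf i).2.1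
      rw [this]; exact hgb
    · exact O_comp a b g f hgt (fun i => (hf i).2.2)

lemma isClone_C03 : IsClone C03 := by
  constructor
  · intro a i
    exact ⟨proj_borel a i, proj_V a i, rfl⟩
  · rintro a b g f ⟨hgB, hgb, hgt⟩ hf
    refine ⟨borel_comp a b g f hgB (fun i => (hf i).1), ?_, ?_⟩
    · exact V_comp a b g f hgb (fun i => (hf i).2.1)
    · show g (fun i => f i (fun _ => true)) = true
      have : (fun i => f i (fun _ => true)) = (fun _ => true) :=
        funext fun i => (hf i).2.2
      rw [this]; exact hgt

lemma isClone_C04 : IsClone C04 := by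
  constructor
  · intro a i
    exact ⟨proj_borel a i, proj_V a i, proj_O a i⟩
  · rintro a b g f ⟨hgB, hgb, hgt⟩ hf
    exact ⟨borel_comp a b g f hgB (fun i => (hf i).1),
      V_comp a b g f hgb (fun i => (hf i).2.1),
      O_comp a b g f hgt (fun i => (hf i).2.2)⟩

lemma isClone_C05 : IsClone C05 := by
  constructor
  · intro a i
    exact ⟨continuous_apply i, rfl, rfl⟩
  · rintro a b g f ⟨hgB, hgb, hgt⟩ hf
    refine ⟨cont_comp a b g f hgB (fun i => (hf i).1), ?_, ?_⟩
    · show g (fun i => f i (fun _ => false)) = false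
      have : (fun i => f i (fun _ => false)) = (fun _ => false) :=
        funext fun i => (hf i).2.1
      rw [this]; exact hgb
    · show g (fun i => f i (fun _ => true)) = true
      have : (fun i => f i (fun _ => true)) = (fun _ => true) :=
        funext fun i => (hf i).2.2
      rw [this]; exact hgt

lemma finRes_C01 : finRes C01 = {f : BFun | finitary f ∧ PresBot f ∧ PresTop f} := by
  ext f
  constructor
  · rintro ⟨⟨hB, hb, ht⟩, hfin⟩
    exact ⟨hfin, hb, ht⟩
  · rintro ⟨hfin, hb, ht⟩
    obtain ⟨a, φ⟩ := f
    cases a with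
    | none => exact absurd rfl hfin
    | some n => exact ⟨⟨fin_borel n φ, hb, ht⟩, hfin⟩

lemma finRes_C02 : finRes C02 = {f : BFun | finitary f ∧ PresBot f ∧ PresTop f} := by
  ext f
  constructor
  · rintro ⟨⟨hB, hb, ht⟩, hfin⟩
    exact ⟨hfin, hb, presTop_of_O _ ht⟩
  · rintro ⟨hfin, hb, ht⟩
    obtain ⟨a, φ⟩ := f
    cases a with
    | none => exact absurd rfl hfin
    | some n => exact ⟨⟨fin_borel n φ, hb, fin_O n φ ht⟩, hfin⟩

lemma finRes_C03 : finRes C03 = {f : BFun | finitary f ∧ PresBot f ∧ PresTop f} := by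
  ext f
  constructor
  · rintro ⟨⟨hB, hb, ht⟩, hfin⟩
    exact ⟨hfin, presBot_of_V _ hb, ht⟩
  · rintro ⟨hfin, hb, ht⟩
    obtain ⟨a, φ⟩ := f
    cases a with
    | none => exact absurd rfl hfin
    | some n => exact ⟨⟨fin_borel n φ, fin_V n φ hb, ht⟩, hfin⟩

lemma finRes_C04 : finRes C04 = {f : BFun | finitary f ∧ PresBot f ∧ PresTop f} := by
  ext f
  constructor
  · rintro ⟨⟨hB, hb, ht⟩, hfin⟩
    exact ⟨hfin, presBot_of_V _ hb, presTop_of_O _ ht⟩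
  · rintro ⟨hfin, hb, ht⟩
    obtain ⟨a, φ⟩ := f
    cases a with
    | none => exact absurd rfl hfin
    | some n => exact ⟨⟨fin_borel n φ, fin_V n φ hb, fin_O n φ ht⟩, hfin⟩

lemma finRes_C05 : finRes C05 = {f : BFun | finitary f ∧ PresBot f ∧ PresTop f} := by
  ext f
  constructor
  · rintro ⟨⟨hB, hb, ht⟩, hfin⟩
    exact ⟨hfin, hb, ht⟩
  · rintro ⟨hfin, hb, ht⟩
    obtain ⟨a, φ⟩ := f
    cases a with
    | none => exact absurd rfl hfin
    | some n => exact ⟨⟨fin_cont n φ, hb, ht⟩, hfin⟩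

end Facts

section Witnesses

noncomputable def efun : (ℕ → Bool) → Bool :=
  fun w => w 0 && (w 1 || decide (∀ m, w (m+2) = true))

lemma cylinder_isOpen {ι : Type} (I : Finset ι) (p : ι → Bool) :
    IsOpen {x : ι → Bool | ∀ i ∈ I, x i = p i} := by
  have he : {x : ι → Bool | ∀ i ∈ I, x i = p i} = Set.pi ↑I (fun i => {p i}) := by
    ext x; simp [Set.mem_pi]
  rw [he]
  exact isOpen_set_pi I.finite_toSet (fun a _ => isOpen_discrete _)

lemma notCont_of_notV (φ : (ℕ → Bool) → Bool) (hb : φ (fun _ => false) = false)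
    (hnV : ¬ VanishNearBot (⟨none, φ⟩ : BFun)) : ¬ IsContFun (⟨none, φ⟩ : BFun) := by
  intro hc
  obtain ⟨N, hdep⟩ := (continuous_iff_findep φ).mp hc
  apply hnV
  apply (notMem_closure_iff_nat _ _).mpr
  refine ⟨N, fun x hx hmem => ?_⟩
  have : φ x = false := (hdep x (fun _ => false) (fun i hi => hx i hi)).trans hb
  have h2 : φ x = true := hmem
  rw [this] at h2
  exact absurd h2 (by simp)

lemma notCont_of_notO (φ : (ℕ → Bool) → Bool) (ht : φ (fun _ => true) = true)
    (hnO : ¬ OneNearTop (⟨none, φ⟩ : BFun)) : ¬ IsContFun (⟨none, φ⟩ : BFun) := by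
  intro hc
  obtain ⟨N, hdep⟩ := (continuous_iff_findep φ).mp hc
  apply hnO
  apply (notMem_closure_iff_nat _ _).mpr
  refine ⟨N, fun x hx hmem => ?_⟩
  have : φ x = true := (hdep x (fun _ => true) (fun i hi => hx i hi)).trans ht
  have h2 : φ x = false := hmem
  rw [this] at h2
  exact absurd h2 (by simp)

lemma bigOr_borel : IsBorelFun (⟨none, bigOr⟩ : BFun) := by
  have he : {x : ℕ → Bool | bigOr x = true} = ⋃ i, {x : ℕ → Bool | x i = true} := by
    ext x; simp [bigOr]
  show MeasurableSet {x : ℕ → Bool | bigOr x = true}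
  rw [he]
  exact MeasurableSet.iUnion (fun i => proj_borel none i)

lemma bigOr_presBot : PresBot (⟨none, bigOr⟩ : BFun) := by
  show bigOr (fun _ => false) = false
  simp [bigOr]

lemma bigOr_presTop : PresTop (⟨none, bigOr⟩ : BFun) := by
  show bigOr (fun _ => true) = true
  simp [bigOr]

lemma bigOr_notV : ¬ VanishNearBot (⟨none, bigOr⟩ : BFun) := by
  intro h
  apply h
  apply (mem_closure_iff_nat _ _).mpr
  intro N
  refine ⟨fun j => decide (j = N), fun i hi => ?_, ?_⟩
  · simp; omega
  · show bigOr _ = true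
    apply decide_eq_true
    exact ⟨N, by simp⟩

lemma bigOr_O : OneNearTop (⟨none, bigOr⟩ : BFun) := by
  apply (O_iff none bigOr).mpr
  refine ⟨{0}, fun x hx => ?_⟩
  have h0 : x 0 = true := hx 0 (Finset.mem_singleton_self 0)
  simp [bigOr]
  exact ⟨0, h0⟩

lemma bigAnd_borel : IsBorelFun (⟨none, bigAnd⟩ : BFun) := by
  have he : {x : ℕ → Bool | bigAnd x = true} = ⋂ i, {x : ℕ → Bool | x i = true} := by
    ext x; simp [bigAnd]
  show MeasurableSet {x : ℕ → Bool | bigAnd x = true}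
  rw [he]
  exact MeasurableSet.iInter (fun i => proj_borel none i)

lemma bigAnd_presBot : PresBot (⟨none, bigAnd⟩ : BFun) := by
  show bigAnd (fun _ => false) = false
  simp [bigAnd]

lemma bigAnd_presTop : PresTop (⟨none, bigAnd⟩ : BFun) := by
  show bigAnd (fun _ => true) = true
  simp [bigAnd]

lemma bigAnd_notO : ¬ OneNearTop (⟨none, bigAnd⟩ : BFun) := by
  intro h
  apply h
  apply (mem_closure_iff_nat _ _).mpr
  intro N
  refine ⟨fun j => decide (j < N), fun i hi => ?_, ?_⟩
  · simp; omega
  · show bigAnd _ = false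
    simp only [bigAnd, decide_eq_false_iff_not]
    intro hh
    have := hh N
    simp at this

lemma bigAnd_V : VanishNearBot (⟨none, bigAnd⟩ : BFun) := by
  apply (V_iff none bigAnd).mpr
  refine ⟨{0}, fun x hx => ?_⟩
  have h0 : x 0 = false := hx 0 (Finset.mem_singleton_self 0)
  simp only [bigAnd, decide_eq_false_iff_not]
  intro hh
  rw [hh 0] at h0
  exact absurd h0 (by simp)

lemma liminf_borel : IsBorelFun (⟨none, liminfF⟩ : BFun) := by
  have he : {x : ℕ → Bool | liminfF x = true} =
      ⋃ N, ⋂ j, {x : ℕ → Bool | x (N + j) = true} := by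
    ext x
    simp only [liminfF, Set.mem_setOf_eq, decide_eq_true_eq, Set.mem_iUnion, Set.mem_iInter]
    constructor
    · rintro ⟨N, hN⟩
      exact ⟨N, fun j => hN (N + j) (Nat.le_add_right N j)⟩
    · rintro ⟨N, hN⟩
      refine ⟨N, fun j hj => ?_⟩
      have := hN (j - N)
      rwa [Nat.add_sub_cancel' hj] at this
  show MeasurableSet {x : ℕ → Bool | liminfF x = true}
  rw [he]
  exact MeasurableSet.iUnion (fun N => MeasurableSet.iInter (fun j => proj_borel none (N + j)))

lemma liminf_presBot : PresBot (⟨none, liminfF⟩ : BFun) := by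
  show liminfF (fun _ => false) = false
  simp only [liminfF, decide_eq_false_iff_not]
  rintro ⟨N, hN⟩
  have := hN N le_rfl
  simp at this

lemma liminf_presTop : PresTop (⟨none, liminfF⟩ : BFun) := by
  show liminfF (fun _ => true) = true
  simp only [liminfF, decide_eq_true_eq]
  exact ⟨0, fun j _ => by simp⟩

lemma liminf_notV : ¬ VanishNearBot (⟨none, liminfF⟩ : BFun) := by
  intro h
  apply h
  apply (mem_closure_iff_nat _ _).mpr
  intro N
  refine ⟨fun j => decide (N ≤ j), fun i hi => ?_, ?_⟩
  · simp; omega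
  · show liminfF _ = true
    simp only [liminfF, decide_eq_true_eq]
    exact ⟨N, fun j hj => by simpa using hj⟩

lemma liminf_notO : ¬ OneNearTop (⟨none, liminfF⟩ : BFun) := by
  intro h
  apply h
  apply (mem_closure_iff_nat _ _).mpr
  intro N
  refine ⟨fun j => decide (j < N), fun i hi => ?_, ?_⟩
  · simp; omega
  · show liminfF _ = false
    simp only [liminfF, decide_eq_false_iff_not]
    rintro ⟨M, hM⟩
    have := hM (M + N) (Nat.le_add_right M N)
    simp only [decide_eq_true_eq] at this
    omega

lemma efun_borel : IsBorelFun (⟨none, efun⟩ : BFun) := by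
  have he : {x : ℕ → Bool | efun x = true} =
      {x : ℕ → Bool | x 0 = true} ∩
        ({x : ℕ → Bool | x 1 = true} ∪ ⋂ m, {x : ℕ → Bool | x (m+2) = true}) := by
    ext x
    simp [efun]
  show MeasurableSet {x : ℕ → Bool | efun x = true}
  rw [he]
  exact (proj_borel none 0).inter ((proj_borel none 1).union
    (MeasurableSet.iInter (fun m => proj_borel none (m+2))))

lemma efun_V : VanishNearBot (⟨none, efun⟩ : BFun) := by
  apply (V_iff none efun).mpr
  refine ⟨{0}, fun x hx => ?_⟩
  have h0 : x 0 = false := hx 0 (Finset.mem_singleton_self 0)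
  simp [efun, h0]

lemma efun_O : OneNearTop (⟨none, efun⟩ : BFun) := by
  apply (O_iff none efun).mpr
  refine ⟨{0, 1}, fun x hx => ?_⟩
  have h0 : x 0 = true := hx 0 (by simp)
  have h1 : x 1 = true := hx 1 (by simp)
  simp [efun, h0, h1]

lemma efun_notCont : ¬ IsContFun (⟨none, efun⟩ : BFun) := by
  intro hc
  obtain ⟨N, hdep⟩ := (continuous_iff_findep efun).mp hc
  set u : ℕ → Bool := fun i => decide (i ≠ 1) with hudef
  set u' : ℕ → Bool := fun i => decide (i ≠ 1 ∧ i < N) with hu'def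
  have hu : efun u = true := by
    have h0 : u 0 = true := by simp [hudef]
    have hall : ∀ m : ℕ, u (m+2) = true := fun m => by
      simp only [hudef, decide_eq_true_eq]
      omega
    simp [efun, h0, hall]
  have hu' : efun u' = false := by
    have hnall : ¬ ∀ m : ℕ, u' (m+2) = true := by
      intro hh
      have := hh N
      simp only [hu'def, decide_eq_true_eq] at this
      omega
    have h1 : u' 1 = false := by simp [hu'def]
    simp [efun, h1, hnall]
  have heq : efun u = efun u' := by
    apply hdep
    intro i hi
    simp only [hudef, hu'def]
    apply decide_eq_decide.mpr
    constructor
    · intro h; exact ⟨h, hi⟩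
    · intro h; exact h.1
  rw [hu, hu'] at heq
  exact absurd heq (by simp)

end Witnesses

section Classify

variable (F : Set BFun)

lemma pres_of_mem (hF : IsClone F)
    (hfin : finRes F = {f | finitary f ∧ PresBot f ∧ PresTop f})
    (f : BFun) (hf : f ∈ F) : PresBot f ∧ PresTop f := by
  obtain ⟨a, φ⟩ := f
  have hcomp := hF.comp a (some 1) φ (fun _ x => x 0) hf
    (fun i => hF.proj (some 1) (0 : Fin 1))
  have hmem : (⟨some 1, fun x : Idx (some 1) → Bool => φ (fun _ => x 0)⟩ : BFun) ∈ finRes F :=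
    ⟨hcomp, by simp [finitary]⟩
  rw [hfin] at hmem
  obtain ⟨-, hb, ht⟩ := hmem
  exact ⟨hb, ht⟩

/-- membership of a finitary pres function, given directly by `hfin`. -/
lemma fin_mem' (hfin : finRes F = {f | finitary f ∧ PresBot f ∧ PresTop f})
    (n : ℕ+) (ψ : (Fin (n : ℕ) → Bool) → Bool)
    (hb : PresBot (⟨some n, ψ⟩ : BFun)) (ht : PresTop (⟨some n, ψ⟩ : BFun)) :
    (⟨some n, ψ⟩ : BFun) ∈ F := by
  have : (⟨some n, ψ⟩ : BFun) ∈ finRes F := by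
    rw [hfin]
    exact ⟨by simp [finitary], hb, ht⟩
  exact this.1

lemma bigOr_slot_ok (ψ : (ℕ → Bool) → Bool) (hb : ψ (fun _ => false) = false) :
    ∀ z, ψ z = true → bigOr z = true := by
  intro z hz
  apply decide_eq_true
  by_contra hc
  push_neg at hc
  have hzb : z = fun _ => false := funext fun i => by
    cases hv : z i
    · rfl
    · exact absurd hv (hc i)
  rw [hzb, hb] at hz
  exact absurd hz (by simp)

lemma bigAnd_slot_ok (ψ : (ℕ → Bool) → Bool) (ht : ψ (fun _ => true) = true) :
    ∀ z, ψ z = false → bigAnd z = false := by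
  intro z hz
  apply decide_eq_false
  intro hcc
  have hzt : z = fun _ => true := funext hcc
  rw [hzt, ht] at hz
  exact absurd hz (by simp)

lemma slotOr_ok (ψ : (ℕ → Bool) → Bool) (I : Finset ℕ)
    (hI : ∀ x, (∀ i ∈ I, x i = false) → ψ x = false) :
    ∀ z, ψ z = true → decide (∃ i, i ∈ insert 0 I ∧ z i = true) = true := by
  intro z hz
  simp only [decide_eq_true_eq]
  by_contra hc
  push_neg at hc
  have : ψ z = false := by
    apply hI
    intro i hi
    have := hc i (Finset.mem_insert_of_mem hi)
    cases hv : z i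
    · rfl
    · exact absurd hv this
  rw [this] at hz
  exact absurd hz (by simp)

lemma slotAnd_ok (ψ : (ℕ → Bool) → Bool) (I : Finset ℕ)
    (hI : ∀ x, (∀ i ∈ I, x i = true) → ψ x = true) :
    ∀ z, ψ z = false → decide (∀ i, i ∈ insert 0 I → z i = true) = false := by
  intro z hz
  simp only [decide_eq_false_iff_not]
  intro hcc
  have : ψ z = true := hI z (fun i hi => hcc i (Finset.mem_insert_of_mem hi))
  rw [this] at hz
  exact absurd hz (by simp)

theorem classify (hF : IsClone F) (hBor : F ⊆ BorelClass)
    (hfin : finRes F = {f | finitary f ∧ PresBot f ∧ PresTop f}) :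
    F = C01 ∨ F = C02 ∨ F = C03 ∨ F = C04 ∨ F = C05 := by
  have hpres : ∀ f ∈ F, PresBot f ∧ PresTop f := fun f hf => pres_of_mem F hF hfin f hf
  by_cases hP : ∃ f ∈ F, ¬ VanishNearBot f
  · -- some member is not vanishing near 0 : we get bigOr
    obtain ⟨f, hfF, hfV⟩ := hP
    obtain ⟨a, φ⟩ := f
    have hOr : (⟨none, bigOr⟩ : BFun) ∈ F := by
      cases a with
      | some n => exact absurd (fin_V n φ (hpres _ hfF).1) hfV
      | none =>
        have hclV : (fun _ => false) ∈ closure {x | φ x = true} := not_not.mp hfV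
        exact bigOr_mem F hF hfin φ hfF (hpres _ hfF).1 hclV
    have hgOr := gOr_of_bigOr F hF hfin hOr
    have hgAnd := gAnd_of_gOr F hF hfin hgOr
    have hIf := gIf_mem F hF hfin hgOr hgAnd
    by_cases hQ : ∃ f ∈ F, ¬ OneNearTop f
    · -- F = C01
      left
      obtain ⟨f2, hf2F, hf2O⟩ := hQ
      obtain ⟨a2, φ2⟩ := f2
      have hAnd : (⟨none, bigAnd⟩ : BFun) ∈ F := by
        cases a2 with
        | some n => exact absurd (fin_O n φ2 (hpres _ hf2F).2) hf2O
        | none =>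
          have hclO : (fun _ => true) ∈ closure {x | φ2 x = false} := not_not.mp hf2O
          exact bigAnd_mem F hF hfin φ2 hf2F (hpres _ hf2F).2 hclO
      apply Set.Subset.antisymm
      · exact fun f hf => ⟨hBor hf, (hpres f hf).1, (hpres f hf).2⟩
      · rintro ⟨a, ψ⟩ ⟨hB, hb, ht⟩
        cases a with
        | some n => exact fin_mem' F hfin n ψ hb ht
        | none =>
          exact omega_mem F hF hfin hIf ψ hB bigOr bigAnd hOr hAnd
            (bigOr_slot_ok ψ hb) (bigAnd_slot_ok ψ ht)
    · -- F = C02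
      right; left
      push_neg at hQ
      apply Set.Subset.antisymm
      · exact fun f hf => ⟨hBor hf, (hpres f hf).1, hQ f hf⟩
      · rintro ⟨a, ψ⟩ ⟨hB, hb, hO⟩
        cases a with
        | some n => exact fin_mem' F hfin n ψ hb (presTop_of_O _ hO)
        | none =>
          obtain ⟨I, hI⟩ := (O_iff none ψ).mp hO
          exact omega_mem F hF hfin hIf ψ hB bigOr
            (fun z => decide (∀ i, i ∈ insert 0 I → z i = true))
            hOr (slotAnd_mem F hF hfin I)
            (bigOr_slot_ok ψ hb) (slotAnd_ok ψ I hI)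
  · push_neg at hP
    by_cases hQ : ∃ f ∈ F, ¬ OneNearTop f
    · -- F = C03
      right; right; left
      obtain ⟨f2, hf2F, hf2O⟩ := hQ
      obtain ⟨a2, φ2⟩ := f2
      have hAnd : (⟨none, bigAnd⟩ : BFun) ∈ F := by
        cases a2 with
        | some n => exact absurd (fin_O n φ2 (hpres _ hf2F).2) hf2O
        | none =>
          have hclO : (fun _ => true) ∈ closure {x | φ2 x = false} := not_not.mp hf2O
          exact bigAnd_mem F hF hfin φ2 hf2F (hpres _ hf2F).2 hclO
      have hgAnd := gAnd_of_bigAnd F hF hfin hAnd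
      have hgOr := gOr_of_gAnd F hF hfin hgAnd
      have hIf := gIf_mem F hF hfin hgOr hgAnd
      apply Set.Subset.antisymm
      · exact fun f hf => ⟨hBor hf, hP f hf, (hpres f hf).2⟩
      · rintro ⟨a, ψ⟩ ⟨hB, hV, ht⟩
        cases a with
        | some n => exact fin_mem' F hfin n ψ (presBot_of_V _ hV) ht
        | none =>
          obtain ⟨I, hI⟩ := (V_iff none ψ).mp hV
          have hAndBig : (⟨none, bigAnd⟩ : BFun) ∈ F := hAnd
          exact omega_mem F hF hfin hIf ψ hB
            (fun z => decide (∃ i, i ∈ insert 0 I ∧ z i = true)) bigAnd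
            (slotOr_mem F hF hfin I) hAndBig
            (slotOr_ok ψ I hI) (bigAnd_slot_ok ψ ht)
    · push_neg at hQ
      by_cases hR : ∃ f ∈ F, ¬ IsContFun f
      · -- F = C04
        right; right; right; left
        obtain ⟨h0, hh0F, hh0c⟩ := hR
        obtain ⟨a0, φ0⟩ := h0
        have hIf : (⟨none, gIf⟩ : BFun) ∈ F := by
          cases a0 with
          | some n => exact absurd (fin_cont n φ0) hh0c
          | none =>
            have hdisc : (∃ p, φ0 p = true ∧ p ∈ closure {x | φ0 x = false}) ∨
                (∃ p, φ0 p = false ∧ p ∈ closure {x | φ0 x = true}) := by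
              by_contra hc
              push_neg at hc
              obtain ⟨hc1, hc2⟩ := hc
              apply hh0c
              show Continuous φ0
              rw [continuous_iff_continuousAt]
              intro p
              have hev : {x : ℕ → Bool | φ0 x = φ0 p} ∈ nhds p := by
                cases hval : φ0 p with
                | true =>
                  have hnc := hc1 p hval
                  obtain ⟨I, hI⟩ := (notMem_closure_iff _ _).mp hnc
                  apply Filter.mem_of_superset
                    ((cylinder_isOpen I p).mem_nhds (fun i _ => rfl))
                  intro x hx
                  have := hI x hx
                  simp only [Set.mem_setOf_eq] at this ⊢
                  cases hv : φ0 x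
                  · exact absurd hv this
                  · rfl
                | false =>
                  have hnc := hc2 p hval
                  obtain ⟨I, hI⟩ := (notMem_closure_iff _ _).mp hnc
                  apply Filter.mem_of_superset
                    ((cylinder_isOpen I p).mem_nhds (fun i _ => rfl))
                  intro x hx
                  have := hI x hx
                  simp only [Set.mem_setOf_eq] at this ⊢
                  cases hv : φ0 x
                  · rfl
                  · exact absurd hv this
              have heq : (fun _ : ℕ → Bool => φ0 p) =ᶠ[nhds p] φ0 := by
                apply Filter.eventuallyEq_of_mem hev
                intro x hx
                exact hx.symm
              exact Filter.Tendsto.congr' heq tendsto_const_nhds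
            rcases hdisc with ⟨p, hp1, hp2⟩ | ⟨p, hp1, hp2⟩
            · have hgAnd := gAnd_of_hyp1 F hF hfin φ0 hh0F p hp1 hp2
              exact gIf_mem F hF hfin (gOr_of_gAnd F hF hfin hgAnd) hgAnd
            · have hgOr := gOr_of_hyp0 F hF hfin φ0 hh0F p hp1 hp2
              exact gIf_mem F hF hfin hgOr (gAnd_of_gOr F hF hfin hgOr)
        apply Set.Subset.antisymm
        · exact fun f hf => ⟨hBor hf, hP f hf, hQ f hf⟩
        · rintro ⟨a, ψ⟩ ⟨hB, hV, hO⟩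
          cases a with
          | some n => exact fin_mem' F hfin n ψ (presBot_of_V _ hV) (presTop_of_O _ hO)
          | none =>
            obtain ⟨I1, hI1⟩ := (V_iff none ψ).mp hV
            obtain ⟨I2, hI2⟩ := (O_iff none ψ).mp hO
            exact omega_mem F hF hfin hIf ψ hB
              (fun z => decide (∃ i, i ∈ insert 0 I1 ∧ z i = true))
              (fun z => decide (∀ i, i ∈ insert 0 I2 → z i = true))
              (slotOr_mem F hF hfin I1) (slotAnd_mem F hF hfin I2)
              (slotOr_ok ψ I1 hI1) (slotAnd_ok ψ I2 hI2)
      · -- F = C05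
        right; right; right; right
        push_neg at hR
        apply Set.Subset.antisymm
        · exact fun f hf => ⟨hR f hf, (hpres f hf).1, (hpres f hf).2⟩
        · rintro ⟨a, ψ⟩ ⟨hc, hb, ht⟩
          cases a with
          | some n => exact fin_mem' F hfin n ψ hb ht
          | none =>
            obtain ⟨N, hdep⟩ := (continuous_iff_findep ψ).mp hc
            exact mem_findep F hF hfin ψ N
              (fun z z' hzz => hdep z z' (fun i hi => hzz i (Nat.lt_succ_of_lt hi))) hb ht

end Classify

section Final

lemma liminf_C01 : (⟨none, liminfF⟩ : BFun) ∈ C01 :=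
  ⟨liminf_borel, liminf_presBot, liminf_presTop⟩

lemma bigOr_C02 : (⟨none, bigOr⟩ : BFun) ∈ C02 :=
  ⟨bigOr_borel, bigOr_presBot, bigOr_O⟩

lemma bigAnd_C03 : (⟨none, bigAnd⟩ : BFun) ∈ C03 :=
  ⟨bigAnd_borel, bigAnd_V, bigAnd_presTop⟩

lemma efun_C04 : (⟨none, efun⟩ : BFun) ∈ C04 :=
  ⟨efun_borel, efun_V, efun_O⟩

lemma ne_12 : C01 ≠ C02 := fun h => liminf_notO (h ▸ liminf_C01).2.2
lemma ne_13 : C01 ≠ C03 := fun h => liminf_notV (h ▸ liminf_C01).2.1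
lemma ne_14 : C01 ≠ C04 := fun h => liminf_notV (h ▸ liminf_C01).2.1
lemma ne_15 : C01 ≠ C05 := fun h =>
  notCont_of_notV liminfF liminf_presBot liminf_notV (h ▸ liminf_C01).1
lemma ne_23 : C02 ≠ C03 := fun h => bigOr_notV (h ▸ bigOr_C02).2.1
lemma ne_24 : C02 ≠ C04 := fun h => bigOr_notV (h ▸ bigOr_C02).2.1
lemma ne_25 : C02 ≠ C05 := fun h =>
  notCont_of_notV bigOr bigOr_presBot bigOr_notV (h ▸ bigOr_C02).1
lemma ne_34 : C03 ≠ C04 := fun h => bigAnd_notO (h ▸ bigAnd_C03).2.2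
lemma ne_35 : C03 ≠ C05 := fun h =>
  notCont_of_notO bigAnd bigAnd_presTop bigAnd_notO (h ▸ bigAnd_C03).1
lemma ne_45 : C04 ≠ C05 := fun h => efun_notCont (h ▸ efun_C04).1

end Final

theorem borel_clones_over_T0T1' :
    (∀ C ∈ [C01, C02, C03, C04, C05], IsClone C ∧ C ⊆ BorelClass ∧
      finRes C = {f | finitary f ∧ PresBot f ∧ PresTop f}) ∧
    List.Pairwise (· ≠ ·) [C01, C02, C03, C04, C05] ∧
    (∀ F : Set BFun, IsClone F → F ⊆ BorelClass →
      finRes F = {f | finitary f ∧ PresBot f ∧ PresTop f} →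
      F = C01 ∨ F = C02 ∨ F = C03 ∨ F = C04 ∨ F = C05) := by
  refine ⟨?_, ?_, ?_⟩
  · intro C hC
    simp only [List.mem_cons, List.not_mem_nil, or_false] at hC
    rcases hC with rfl | rfl | rfl | rfl | rfl
    · exact ⟨isClone_C01, fun f hf => hf.1, finRes_C01⟩
    · exact ⟨isClone_C02, fun f hf => hf.1, finRes_C02⟩
    · exact ⟨isClone_C03, fun f hf => hf.1, finRes_C03⟩
    · exact ⟨isClone_C04, fun f hf => hf.1, finRes_C04⟩
    · exact ⟨isClone_C05, fun f hf => cont_borel f hf.1, finRes_C05⟩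
  · refine List.Pairwise.cons ?_ (List.Pairwise.cons ?_ (List.Pairwise.cons ?_
      (List.Pairwise.cons ?_ (List.Pairwise.cons ?_ List.Pairwise.nil))))
    · intro a ha
      simp only [List.mem_cons, List.not_mem_nil, or_false] at ha
      rcases ha with rfl | rfl | rfl | rfl
      exacts [ne_12, ne_13, ne_14, ne_15]
    · intro a ha
      simp only [List.mem_cons, List.not_mem_nil, or_false] at ha
      rcases ha with rfl | rfl | rfl
      exacts [ne_23, ne_24, ne_25]
    · intro a ha
      simp only [List.mem_cons, List.not_mem_nil, or_false] at ha
      rcases ha with rfl | rfl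
      exacts [ne_34, ne_35]
    · intro a ha
      simp only [List.mem_cons, List.not_mem_nil, or_false] at ha
      rcases ha with rfl
      exact ne_45
    · intro a ha
      simp at ha
  · exact fun F hF hB hfin => classify F hF hB hfin

/-- There are exactly five Borel clones whose finitary restriction is the set of all
finitary `f` with `f(0⃗) = 0` and `f(1⃗) = 1`, namely all Borel `f` satisfying:
(i) `f(0⃗) = 0 ∧ f(1⃗) = 1`; (ii) `f(0⃗) = 0` and `f = 1` near `1⃗`; (iii) `f` vanishes
near `0⃗` and `f(1⃗) = 1`; (iv) `f` vanishes near `0⃗` and `f = 1` near `1⃗`;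
(v) `f` continuous with `f(0⃗) = 0 ∧ f(1⃗) = 1`. -/
theorem borel_clones_over_T0T1 :
    (∀ C ∈ [C01, C02, C03, C04, C05], IsClone C ∧ C ⊆ BorelClass ∧
      finRes C = {f | finitary f ∧ PresBot f ∧ PresTop f}) ∧
    List.Pairwise (· ≠ ·) [C01, C02, C03, C04, C05] ∧
    (∀ F : Set BFun, IsClone F → F ⊆ BorelClass →
      finRes F = {f | finitary f ∧ PresBot f ∧ PresTop f} →
      F = C01 ∨ F = C02 ∨ F = C03 ∨ F = C04 ∨ F = C05) :=
  borel_clones_over_T0T1'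
end
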